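/- arXiv:2509.12693 — 7 statements merged into one kernel-verified Lean document; each statement's English description precedes it below -/
import Mathlib

section
/- Let q be a prime power, m a positive integer, and α_1,...,α_k ∈ F_{q^m}. Then the determinant of the k×k Moore matrix M with entries M[i][j] = α_j^{q^i} (0 ≤ i ≤ k-1, 1 ≤ j ≤ k) equals α_1 · ∏_{j=1}^{k-1} ∏_{(b_1,...,b_j) ∈ F_q^j} (α_{j+1} - ∑_{i=1}^{j} b_i α_i). In particular, M is invertible if and only if α_1,...,α_k are linearly independent over F_q. -/
/-!
Since Frobenius is `F_q`-linear, an `F_q`-linear relation among the columns of a Moore matrix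
gives a kernel vector, so the Moore determinant of a dependent family vanishes. Expanding
`det M(v_1, …, v_k, X)` along its last column gives a polynomial of degree `q ^ k` with leading
coefficient `det M(v_1, …, v_k)`, which vanishes on the `F_q`-span of the `v_i`. When the `v_i`
are independent this span has exactly `q ^ k` elements, so the polynomial is
`det M(v) * ∏ (X - u)` over the span. Induction on `k` gives the product formula, and the new
factor is nonzero exactly when the added element is outside the span, which gives the
invertibility criterion.
-/

open Finset Polynomial Matrix

section CommRing

variable {R : Type*} [CommRing R] (q : ℕ)

def mooreMatrix {ι : Type*} {m : ℕ} (v : ι → R) : Matrix (Fin m) ι R :=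
  Matrix.of fun i j => v j ^ q ^ (i : ℕ)

noncomputable def moorePoly {k : ℕ} (v : Fin k → R) : R[X] :=
  ∑ i : Fin (k + 1),
    C ((-1) ^ (i + k : ℕ) * ((mooreMatrix q v).submatrix i.succAbove id).det) * X ^ q ^ (i : ℕ)

variable {q} {k : ℕ} (v : Fin k → R)

theorem eval_moorePoly (x : R) : (moorePoly q v).eval x = (mooreMatrix q (Fin.snoc v x)).det := by
  rw [Matrix.det_succ_column _ (Fin.last k), moorePoly, eval_finsetSum]
  refine sum_congr rfl fun i _ => ?_
  have hminor : (mooreMatrix q (Fin.snoc v x)).submatrix i.succAbove (Fin.last k).succAbove =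
      (mooreMatrix q v).submatrix i.succAbove id := by
    ext a b
    simp [mooreMatrix]
  rw [hminor]
  simp [mooreMatrix]
  ring

theorem natDegree_moorePoly_sub_lt (hq : 1 < q) :
    (moorePoly q v - C (mooreMatrix q v).det * X ^ q ^ k).natDegree < q ^ k := by
  have hlast : (mooreMatrix q v).submatrix (Fin.last k).succAbove id = mooreMatrix q v := by
    ext a b
    simp [mooreMatrix]
  rw [moorePoly, Fin.sum_univ_castSucc]
  simp only [Fin.val_last, hlast, ← two_mul, pow_mul, neg_one_sq, one_pow,
    one_mul, add_sub_cancel_right]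
  refine (natDegree_sum_le_of_forall_le _ _ fun i _ => ?_).trans_lt
    (Nat.sub_one_lt (pow_pos (by omega) k).ne')
  exact (natDegree_C_mul_X_pow_le _ _).trans
    (Nat.le_sub_one_of_lt (Nat.pow_lt_pow_right hq i.is_lt))

end CommRing

section FiniteField

variable {Fq K : Type*} [Field Fq] [Fintype Fq]

theorem FiniteField.frobeniusAlgHom_pow_apply [CommRing K] [Algebra Fq K] (i : ℕ) (x : K) :
    (frobeniusAlgHom Fq K ^ i) x = x ^ Fintype.card Fq ^ i := by
  rw [AlgHom.coe_pow, FiniteField.coe_frobeniusAlgHom, pow_iterate]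

theorem mooreMatrix_mulVec_algebraMap [CommRing K] [Algebra Fq K] {ι : Type*} [Fintype ι]
    {m : ℕ} (v : ι → K) (c : ι → Fq) :
    (mooreMatrix (Fintype.card Fq) v : Matrix (Fin m) ι K) *ᵥ (algebraMap Fq K ∘ c) =
      fun i : Fin m => (∑ j, c j • v j) ^ Fintype.card Fq ^ (i : ℕ) := by
  ext i
  rw [← FiniteField.frobeniusAlgHom_pow_apply, map_sum]
  refine sum_congr rfl fun j _ => ?_
  rw [map_smul, FiniteField.frobeniusAlgHom_pow_apply, Algebra.smul_def, mul_comm]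
  rfl

variable [Field K] [Algebra Fq K]

theorem det_mooreMatrix_eq_zero_of_not_linearIndependent {k : ℕ} {v : Fin k → K}
    (hv : ¬LinearIndependent Fq v) : (mooreMatrix (Fintype.card Fq) v).det = 0 := by
  obtain ⟨c, hc, j, hj⟩ := Fintype.not_linearIndependent_iff.mp hv
  refine exists_mulVec_eq_zero_iff.mp ⟨algebraMap Fq K ∘ c, fun h => hj ?_, ?_⟩
  · simpa using congr_fun h j
  · rw [mooreMatrix_mulVec_algebraMap, hc]
    ext i
    exact zero_pow (pow_ne_zero _ Fintype.card_ne_zero)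

theorem moorePoly_eq_C_det_mul_prod {k : ℕ} {v : Fin k → K} (hv : LinearIndependent Fq v) :
    moorePoly (Fintype.card Fq) v = C (mooreMatrix (Fintype.card Fq) v).det *
      ∏ b : Fin k → Fq, (X - C (Fintype.linearCombination Fq v b)) := by
  set q := Fintype.card Fq
  set e := Fintype.linearCombination Fq v
  have hQ : IsMonicOfDegree (∏ b : Fin k → Fq, (X - C (e b))) (q ^ k) :=
    ⟨by simp [q], monic_prod_of_monic _ _ fun b _ => monic_X_sub_C _⟩
  have hroot : ∀ b, (moorePoly q v).eval (e b) = 0 := fun b => by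
    rw [eval_moorePoly]
    refine det_mooreMatrix_eq_zero_of_not_linearIndependent fun h => ?_
    exact (linearIndependent_finSnoc.mp h).2
      ((Submodule.mem_span_range_iff_exists_fun Fq).mpr ⟨b, rfl⟩)
  rw [← sub_eq_zero]
  refine eq_zero_of_natDegree_lt_card_of_eval_eq_zero _ hv.fintypeLinearCombination_injective
    (fun b => ?_) ?_
  · have hfactor : (X - C (e b)).eval (e b) = 0 := by rw [eval_sub, eval_X, eval_C, sub_self]
    rw [eval_sub, hroot, eval_mul, eval_prod, prod_eq_zero (mem_univ b) hfactor, mul_zero,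
      sub_zero]
  · rw [Fintype.card_fun, Fintype.card_fin,
      ← sub_sub_sub_cancel_right _ _ (C (mooreMatrix q v).det * X ^ q ^ k), ← mul_sub]
    refine (natDegree_sub_le _ _).trans_lt
      (max_lt (natDegree_moorePoly_sub_lt v Fintype.one_lt_card) ?_)
    exact (natDegree_C_mul_le _ _).trans_lt
      (hQ.natDegree_sub_X_pow (pow_ne_zero _ Fintype.card_ne_zero))

theorem det_mooreMatrix_snoc {k : ℕ} (v : Fin k → K) (x : K) :
    (mooreMatrix (Fintype.card Fq) (Fin.snoc v x)).det =
      (mooreMatrix (Fintype.card Fq) v).det * ∏ b : Fin k → Fq, (x - ∑ i, b i • v i) := by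
  by_cases hv : LinearIndependent Fq v
  · rw [← eval_moorePoly, moorePoly_eq_C_det_mul_prod hv, eval_mul, eval_C, eval_prod]
    refine congrArg (_ * ·) (prod_congr rfl fun b _ => ?_)
    rw [eval_sub, eval_X, eval_C, Fintype.linearCombination_apply]
  · have hvx : ¬LinearIndependent Fq (Fin.snoc v x : Fin (k + 1) → K) :=
      fun h => hv (linearIndependent_finSnoc.mp h).1
    rw [det_mooreMatrix_eq_zero_of_not_linearIndependent hv,
      det_mooreMatrix_eq_zero_of_not_linearIndependent hvx, zero_mul]

theorem det_mooreMatrix_ne_zero_iff {k : ℕ} (v : Fin k → K) :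
    (mooreMatrix (Fintype.card Fq) v).det ≠ 0 ↔ LinearIndependent Fq v := by
  induction k with
  | zero => simp
  | succ k ih =>
    rw [← Fin.snoc_init_self v, det_mooreMatrix_snoc, mul_ne_zero_iff, ih,
      linearIndependent_finSnoc, prod_ne_zero_iff, Submodule.mem_span_range_iff_exists_fun]
    simp only [mem_univ, forall_const, sub_ne_zero, not_exists]
    exact and_congr_right fun _ => forall_congr' fun _ => ne_comm

theorem det_mooreMatrix_eq_mul_prod (α : ℕ → K) {k : ℕ} (hk : 0 < k) :
    (mooreMatrix (Fintype.card Fq) fun j : Fin k => α j).det =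
      α 0 * ∏ j ∈ Ico 1 k, ∏ b : Fin j → Fq, (α j - ∑ i : Fin j, b i • α i) := by
  induction k, hk using Nat.le_induction with
  | base => simp [mooreMatrix]
  | succ k hk ih =>
    have hsnoc : (fun j : Fin (k + 1) => α j) = Fin.snoc (fun j : Fin k => α j) (α k) := by
      ext j
      induction j using Fin.lastCases <;> simp
    rw [hsnoc, det_mooreMatrix_snoc, ih, prod_Ico_succ_top hk, mul_assoc]

end FiniteField

theorem moore_determinant_general {Fq K : Type*} [Field Fq] [Fintype Fq] [Field K]
    [Algebra Fq K] (q k : ℕ) (hq : Fintype.card Fq = q) (hk : 0 < k) (α : ℕ → K) :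
    (Matrix.det (Matrix.of fun i j : Fin k => α (j:ℕ) ^ q ^ (i:ℕ)) =
      α 0 * ∏ j ∈ Finset.Ico 1 k, ∏ b : Fin j → Fq,
        (α j - ∑ i : Fin j, b i • α (i:ℕ))) ∧
    (IsUnit (Matrix.det (Matrix.of fun i j : Fin k => α (j:ℕ) ^ q ^ (i:ℕ))) ↔
      LinearIndependent Fq (fun i : Fin k => α (i:ℕ))) := by
  subst hq
  exact ⟨det_mooreMatrix_eq_mul_prod α hk,
    isUnit_iff_ne_zero.trans (det_mooreMatrix_ne_zero_iff _)⟩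

/-- the Moore determinant formula, and the invertibility criterion:
the Moore matrix of `α 0, …, α (k-1)` is invertible iff these elements are
linearly independent over `F_q`. -/
theorem moore_determinant {Fq K : Type*} [Field Fq] [Fintype Fq] [Field K] [Fintype K]
    [Algebra Fq K] (q m k : ℕ) (hq : Fintype.card Fq = q) (hm : 0 < m)
    (hK : Fintype.card K = q ^ m) (hk : 0 < k) (α : ℕ → K) :
    (Matrix.det (Matrix.of fun i j : Fin k => α (j:ℕ) ^ q ^ (i:ℕ)) =
      α 0 * ∏ j ∈ Finset.Ico 1 k, ∏ b : Fin j → Fq,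
        (α j - ∑ i : Fin j, b i • α (i:ℕ))) ∧
    (IsUnit (Matrix.det (Matrix.of fun i j : Fin k => α (j:ℕ) ^ q ^ (i:ℕ))) ↔
      LinearIndependent Fq (fun i : Fin k => α (i:ℕ))) :=
  moore_determinant_general q k hq hk α
end

section
/- Let q be a prime power, m a positive integer, and U an F_q-linear subspace of F_{q^m}. Then the polynomial ∏_{α ∈ U} (x - α) is a linearized polynomial over F_{q^m}, i.e., all of its nonzero coefficients occur only in degrees that are powers of q, and it has the form ∑_{j} c_j x^{q^{d-j}} where q^d = |U|. -/
/-!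
Choose a basis `b₁, …, b_d` of `U` and put `L₀ = X`,
`L_{i+1} = L_i ^ q - L_i(b_{i+1}) ^ (q - 1) L_i`. Each `L_i` is a monic linearized polynomial
`∑_{j ≤ i} c_j X^{q^j}` of degree `q ^ i`. Evaluation of a linearized polynomial is
`𝔽_q`-linear, so if `L_i` vanishes on `⟨b₁, …, b_i⟩` then `L_i(a b_{i+1} + z) = a γ` with
`γ = L_i(b_{i+1})`, and `(a γ) ^ q = a γ ^ q` shows that `L_{i+1}` vanishes on
`⟨b₁, …, b_{i+1}⟩`. Thus `L_d` is monic of degree `q ^ d = |U|` and vanishes on `U`,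
hence equals `∏_{α ∈ U} (X - α)`.
-/

open Finset Polynomial

theorem Finset.prod_X_sub_C_eq_of_monic {R : Type*} [CommRing R] [IsDomain R] {s : Finset R}
    {f : R[X]} (hf : f.Monic) (hdeg : f.natDegree ≤ #s) (hs : ∀ x ∈ s, f.eval x = 0) :
    ∏ x ∈ s, (X - C x) = f := by
  have hdvd : ∏ x ∈ s, (X - C x) ∣ f := by
    refine (Multiset.prod_X_sub_C_dvd_iff_le_roots hf.ne_zero s.val).2 ?_
    exact (Multiset.le_iff_subset s.nodup).2 fun x hx => (mem_roots hf.ne_zero).2 (hs x hx)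
  refine (eq_of_monic_of_dvd_of_natDegree_le (monic_prod_of_monic _ _ fun x _ => monic_X_sub_C x)
    hf hdvd ?_).symm
  rwa [natDegree_finsetProd_X_sub_C_eq_card]

theorem Polynomial.Monic.pow_sub_C_mul {R : Type*} [CommRing R] {f : R[X]} (hf : f.Monic)
    (hdeg : 0 < f.natDegree) {q : ℕ} (hq : 1 < q) (c : R) :
    (f ^ q - C c * f).Monic ∧ (f ^ q - C c * f).natDegree = q * f.natDegree := by
  have hlt : (C c * f).natDegree < (f ^ q).natDegree := by
    rw [hf.natDegree_pow]
    exact (natDegree_C_mul_le c f).trans_lt (lt_mul_left hdeg hq)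
  refine ⟨(hf.pow q).sub_of_left (degree_lt_degree hlt), ?_⟩
  rw [natDegree_sub_eq_left_of_natDegree_lt hlt, hf.natDegree_pow]

noncomputable def linearizedPolys (R : Type*) [CommRing R] (q n : ℕ) : Submodule R R[X] :=
  Submodule.span R (Set.range fun j : Fin (n + 1) => (X : R[X]) ^ q ^ (j : ℕ))

section linearizedPolys

variable {R : Type*} [CommRing R] {q n : ℕ}

theorem mem_linearizedPolys_iff {f : R[X]} :
    f ∈ linearizedPolys R q n ↔ ∃ c : Fin (n + 1) → R, ∑ j, C (c j) * X ^ q ^ (j : ℕ) = f := by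
  simp only [linearizedPolys, Submodule.mem_span_range_iff_exists_fun, smul_eq_C_mul]

theorem X_mem_linearizedPolys : (X : R[X]) ∈ linearizedPolys R q n :=
  Submodule.subset_span ⟨0, by simp⟩

theorem linearizedPolys_mono {m : ℕ} (h : n ≤ m) : linearizedPolys R q n ≤ linearizedPolys R q m :=
  Submodule.span_mono fun _ ⟨j, hj⟩ => ⟨Fin.castLE (by omega) j, hj⟩

variable {Fq : Type*} [Field Fq] [Fintype Fq] [Algebra Fq R]

theorem pow_card_mem_linearizedPolys {f : R[X]}
    (hf : f ∈ linearizedPolys R (Fintype.card Fq) n) :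
    f ^ Fintype.card Fq ∈ linearizedPolys R (Fintype.card Fq) (n + 1) := by
  induction hf using Submodule.span_induction with
  | mem g hg =>
    obtain ⟨j, rfl⟩ := hg
    exact Submodule.subset_span ⟨j.succ, by simp [← pow_mul, pow_succ]⟩
  | zero => simp [zero_pow Fintype.card_ne_zero]
  | add g h _ _ hg hh =>
    rw [← FiniteField.frobeniusAlgHom_apply Fq, map_add]
    exact add_mem hg hh
  | smul c g _ hg =>
    rw [_root_.smul_pow]
    exact Submodule.smul_mem _ _ hg

theorem exists_linearMap_eq_eval_of_mem_linearizedPolys {f : R[X]}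
    (hf : f ∈ linearizedPolys R (Fintype.card Fq) n) :
    ∃ φ : R →ₗ[Fq] R, ∀ x, φ x = f.eval x := by
  induction hf using Submodule.span_induction with
  | mem g hg =>
    obtain ⟨j, rfl⟩ := hg
    refine ⟨(FiniteField.frobeniusAlgHom Fq R ^ (j : ℕ)).toLinearMap, fun x => ?_⟩
    simp [AlgHom.coe_pow, FiniteField.coe_frobeniusAlgHom, pow_iterate]
  | zero => exact ⟨0, fun x => by simp⟩
  | add g h _ _ hg hh =>
    obtain ⟨φ, hφ⟩ := hg
    obtain ⟨ψ, hψ⟩ := hh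
    exact ⟨φ + ψ, fun x => by simp [hφ, hψ]⟩
  | smul c g _ hg =>
    obtain ⟨φ, hφ⟩ := hg
    exact ⟨LinearMap.mulLeft Fq c ∘ₗ φ, fun x => by simp [hφ]⟩

end linearizedPolys

section Vanishing

variable {K : Type*} [CommRing K] {Fq : Type*} [Field Fq] [Fintype Fq] [Algebra Fq K]

theorem eval_pow_card_sub_C_mul_eq_zero {n : ℕ} {f : K[X]}
    (hf : f ∈ linearizedPolys K (Fintype.card Fq) n) {S : Set K}
    (hS : ∀ x ∈ Submodule.span Fq S, f.eval x = 0) (b : K) :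
    ∀ x ∈ Submodule.span Fq (insert b S),
      (f ^ Fintype.card Fq - C (f.eval b ^ (Fintype.card Fq - 1)) * f).eval x = 0 := by
  obtain ⟨φ, hφ⟩ := exists_linearMap_eq_eval_of_mem_linearizedPolys hf
  intro x hx
  obtain ⟨a, z, hz, rfl⟩ := Submodule.mem_span_insert.1 hx
  have hfx : f.eval (a • b + z) = a • f.eval b := by
    rw [← hφ, map_add, map_smul, hφ, hφ, hS z hz, add_zero]
  rw [eval_sub, eval_mul, eval_C, eval_pow, hfx, mul_smul_comm, pow_sub_one_mul,
    ← FiniteField.frobeniusAlgHom_apply Fq, map_smul, FiniteField.frobeniusAlgHom_apply, sub_self]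
  exact Fintype.card_ne_zero

theorem exists_monic_mem_linearizedPolys_vanishing_on_span [Nontrivial K] {n : ℕ}
    (v : Fin n → K) :
    ∃ f ∈ linearizedPolys K (Fintype.card Fq) n, f.Monic ∧ f.natDegree = Fintype.card Fq ^ n ∧
      ∀ x ∈ Submodule.span Fq (Set.range v), f.eval x = 0 := by
  induction v using Fin.consInduction with
  | elim0 =>
    refine ⟨X, X_mem_linearizedPolys, monic_X, by simp, fun x hx => ?_⟩
    rw [Set.range_eq_empty, Submodule.span_empty, Submodule.mem_bot] at hx
    simp [hx]
  | cons b v ih =>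
    obtain ⟨f, hf, hmonic, hdeg, hvanish⟩ := ih
    obtain ⟨hmonic', hdeg'⟩ := hmonic.pow_sub_C_mul (by rw [hdeg]; positivity)
      (Fintype.one_lt_card (α := Fq)) (f.eval b ^ (Fintype.card Fq - 1))
    refine ⟨_, ?_, hmonic', by rw [hdeg', hdeg, pow_succ'], ?_⟩
    · refine sub_mem (pow_card_mem_linearizedPolys hf) ?_
      rw [← smul_eq_C_mul]
      exact Submodule.smul_mem _ _ (linearizedPolys_mono (Nat.le_succ _) hf)
    · rw [Fin.range_cons]
      exact eval_pow_card_sub_C_mul_eq_zero hf hvanish b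

end Vanishing

theorem Module.Basis.span_range_coe {R M : Type*} [Ring R] [AddCommGroup M] [Module R M]
    {ι : Type*} {U : Submodule R M} (b : Module.Basis ι R U) :
    Submodule.span R (Set.range fun i => (b i : M)) = U := by
  change Submodule.span R (Set.range (U.subtype ∘ b)) = U
  rw [Set.range_comp, Submodule.span_image, b.span_eq, Submodule.map_top,
    Submodule.range_subtype]

theorem prod_subspace_linearized_general {Fq K : Type*} [Field Fq] [Fintype Fq] [Field K] [Fintype K]
    [Algebra Fq K] (q d : ℕ) (hq : Fintype.card Fq = q)
    (U : Submodule Fq K) [DecidablePred (· ∈ U)] (hd : Nat.card U = q ^ d) :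
    ∃ c : Fin (d+1) → K,
      ∏ β ∈ Finset.univ.filter (· ∈ U), (Polynomial.X - Polynomial.C β) =
        ∑ j : Fin (d+1), Polynomial.C (c j) * Polynomial.X ^ q ^ (d - (j:ℕ)) := by
  subst hq
  have hcard : #(univ.filter (· ∈ U)) = Fintype.card Fq ^ d := by
    rw [← Fintype.card_subtype, ← Nat.card_eq_fintype_card, ← hd]
  have hdim : Module.finrank Fq U = d := by
    refine Nat.pow_right_injective (Fintype.one_lt_card (α := Fq)) ?_
    dsimp only
    rw [← Module.card_eq_pow_finrank, ← hd, Nat.card_eq_fintype_card]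
  obtain ⟨f, hf, hmonic, hdeg, hvanish⟩ :=
    exists_monic_mem_linearizedPolys_vanishing_on_span (Fq := Fq)
      fun i => (Module.finBasis Fq U i : K)
  rw [(Module.finBasis Fq U).span_range_coe] at hvanish
  rw [hdim] at hf hdeg
  rw [Finset.prod_X_sub_C_eq_of_monic hmonic (hdeg.trans hcard.symm).le
    fun x hx => hvanish x (Finset.mem_filter.1 hx).2]
  obtain ⟨c, rfl⟩ := mem_linearizedPolys_iff.1 hf
  refine ⟨c ∘ Fin.rev, (Fintype.sum_equiv Fin.revPerm _ _ fun j => ?_).symm⟩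
  simp [Fin.val_rev]

/-- for an `F_q`-linear subspace `U` of `F_{q^m}` with `|U| = q^d`, the polynomial
`∏_{α ∈ U} (X - α)` is a linearized polynomial: it has the form `∑_j c_j X^{q^{d-j}}`
(so all nonzero coefficients occur only in degrees that are powers of `q`). -/
theorem prod_subspace_linearized {Fq K : Type*} [Field Fq] [Fintype Fq] [Field K] [Fintype K]
    [Algebra Fq K] (q m d : ℕ) (hq : Fintype.card Fq = q) (hm : 0 < m)
    (hK : Fintype.card K = q ^ m)
    (U : Submodule Fq K) [DecidablePred (· ∈ U)] (hd : Nat.card U = q ^ d) :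
    ∃ c : Fin (d+1) → K,
      ∏ β ∈ Finset.univ.filter (· ∈ U), (Polynomial.X - Polynomial.C β) =
        ∑ j : Fin (d+1), Polynomial.C (c j) * Polynomial.X ^ q ^ (d - (j:ℕ)) :=
  prod_subspace_linearized_general q d hq U hd
end

section
/- Let q be a prime power, k ≤ m, and suppose α_1,...,α_k ∈ F_{q^m} are linearly independent over F_q. Write ∏_{α ∈ U} (x-α) = ∑_{j=0}^{k} c_j x^{q^{k-j}} where U = ⟨α_1,...,α_k⟩_{F_q} (so c_0 = 1), and set c_j = 0 for j > k. For t ≥ 0 with k+t ≤ m, define e_{t,0},...,e_{t,t} via: e_{j,j}=1 and e_{i,j} = -∑_{s=0}^{i-j-1} e_{j+s,j} c_{i-j-s}^{q^i} for j<i. For 0 ≤ h ≤ k-1, let g_h^{(t)} = -∑_{i=0}^{min(t,h)} e_{t,i} c_{k-h+i}^{q^i}. Then det(M^{(h,k+t)}) = g_h^{(t)} · det(M), where M is the k×k Moore matrix with rows (α_1^{q^i},...,α_k^{q^i}), i = 0,...,k-1, and M^{(h,k+t)} is M with row h replaced by (α_1^{q^{k+t}},...,α_k^{q^{k+t}}).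 -/
open Finset Polynomial

/-- `twistE q c m j` is the entry `e_{j+m, j}`, defined by the triangular inversion
`e_{j,j} = 1`, `e_{i,j} = -∑_{s=0}^{i-j-1} e_{j+s,j} c_{i-j-s}^{q^i}`. -/
noncomputable def twistE {K : Type*} [Field K] (q : ℕ) (c : ℕ → K) : ℕ → ℕ → K
  | 0, _ => 1
  | (m+1), j =>
      -∑ s ∈ (Finset.range (m+1)).attach,
        twistE q c s.1 j * c (m + 1 - s.1) ^ q ^ (j + m + 1)
  termination_by m _ => m
  decreasing_by exact Finset.mem_range.mp s.2

lemma exists_pow_q_hom (Fq K : Type*) [Field Fq] [Fintype Fq] [Field K] [Algebra Fq K]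
    (q s : ℕ) (hq : Fintype.card Fq = q) : ∃ φ : K →+* K, ∀ x : K, φ x = x ^ q ^ s := by
  obtain ⟨p, hchar⟩ := CharP.exists Fq
  haveI := hchar
  have hp : p.Prime := CharP.char_is_prime Fq p
  obtain ⟨n, -, hqn⟩ := FiniteField.card Fq p
  haveI : CharP K p := charP_of_injective_algebraMap (algebraMap Fq K).injective p
  haveI : ExpChar K p := ExpChar.prime hp
  exact ⟨iterateFrobenius K p (n * s), fun x => by
    rw [iterateFrobenius_def, pow_mul, ← hqn, hq]⟩

lemma c_zero_eq_one {K : Type*} [Field K] (q k : ℕ) (hq2 : 2 ≤ q)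
    (S : Finset K) (hS : S.card = q ^ k) (c : ℕ → K)
    (hc : ∏ β ∈ S, (X - C β) = ∑ j ∈ range (k+1), C (c j) * X ^ q ^ (k - j)) :
    c 0 = 1 := by
  have hmonic : (∏ β ∈ S, (X - C β)).Monic :=
    monic_prod_of_monic _ _ fun β _ => monic_X_sub_C β
  have hdeg : (∏ β ∈ S, (X - C β)).natDegree = q ^ k := by
    rw [natDegree_prod _ _ fun β _ => X_sub_C_ne_zero β]
    simp [hS]
  have h1 : (∏ β ∈ S, (X - C β)).coeff (q ^ k) = 1 := by
    rw [← hdeg]; exact hmonic.coeff_natDegree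
  rw [hc, finset_sum_coeff] at h1
  simp only [coeff_C_mul, coeff_X_pow] at h1
  rw [Finset.sum_eq_single 0 (fun j hj hj0 => ?_) (fun h => absurd (mem_range.2 (by omega)) h)]
    at h1
  · simpa using h1
  · rw [mem_range] at hj
    rw [if_neg, mul_zero]
    exact fun h => absurd h (Nat.ne_of_gt (Nat.pow_lt_pow_right (by omega) (by omega)))

lemma pow_q_relation {Fq K : Type*} [Field Fq] [Fintype Fq] [Field K] [Algebra Fq K]
    (q k : ℕ) (hq : Fintype.card Fq = q)
    (S : Finset K) (hS : S.card = q ^ k) (c : ℕ → K)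
    (hc : ∏ β ∈ S, (X - C β) = ∑ j ∈ range (k+1), C (c j) * X ^ q ^ (k - j))
    (hczero : ∀ j, k < j → c j = 0)
    (β : K) (hβ : β ∈ S) (s n : ℕ) (hkn : k ≤ n) :
    β ^ q ^ (k + s) = -∑ j ∈ range n, c (j+1) ^ q ^ s * β ^ q ^ (k + s - (j+1)) := by
  have hq2 : 2 ≤ q := by rw [← hq]; exact Fintype.one_lt_card
  have hc0 := c_zero_eq_one q k hq2 S hS c hc
  have heval : ∑ j ∈ range (k+1), c j * β ^ q ^ (k - j) = 0 := by
    have h := congrArg (Polynomial.eval β) hc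
    rw [Polynomial.eval_prod, Finset.prod_eq_zero hβ (by simp), Polynomial.eval_finset_sum] at h
    simpa [eval_mul, eval_pow] using h.symm
  have base : β ^ q ^ k = -∑ j ∈ range k, c (j+1) * β ^ q ^ (k - (j+1)) := by
    rw [Finset.sum_range_succ'] at heval
    simp only [Nat.sub_zero, hc0, one_mul] at heval
    linear_combination heval
  obtain ⟨φ, hφ⟩ := exists_pow_q_hom Fq K q s hq
  have step : β ^ q ^ (k + s) = -∑ j ∈ range k, c (j+1) ^ q ^ s * β ^ q ^ (k + s - (j+1)) := by
    have h := congrArg φ base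
    rw [map_neg, map_sum, hφ, ← pow_mul, ← pow_add] at h
    rw [h, neg_inj]
    refine Finset.sum_congr rfl fun j hj => ?_
    rw [mem_range] at hj
    rw [map_mul, hφ, hφ, ← pow_mul, ← pow_add, show k - (j+1) + s = k + s - (j+1) by omega]
  rw [step, neg_inj]
  apply Finset.sum_subset (Finset.range_subset_range.2 hkn)
  intro j _ hjk
  rw [mem_range] at hjk
  rw [hczero (j+1) (by omega), zero_pow (pow_pos (by omega : 0 < q) s).ne', zero_mul]


lemma sum_triangle {M : Type*} [AddCommMonoid M] (n : ℕ) (f : ℕ → ℕ → M) :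
    ∑ j ∈ Finset.range n, ∑ i ∈ Finset.range (n - j), f j i
      = ∑ i ∈ Finset.range n, ∑ j ∈ Finset.range (n - i), f j i := by
  have key : ∀ (g : ℕ → ℕ → M) (j : ℕ),
      ∑ i ∈ Finset.range (n - j), g j i
        = ∑ i ∈ Finset.range n, if j + i < n then g j i else 0 := by
    intro g j
    have h : Finset.range (n - j) = (Finset.range n).filter (fun i => j + i < n) := by
      ext i; simp only [Finset.mem_range, Finset.mem_filter]; omega
    rw [h, Finset.sum_filter]
  calc ∑ j ∈ Finset.range n, ∑ i ∈ Finset.range (n - j), f j i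
      = ∑ j ∈ Finset.range n, ∑ i ∈ Finset.range n, if j + i < n then f j i else 0 :=
        Finset.sum_congr rfl fun j _ => key f j
    _ = ∑ i ∈ Finset.range n, ∑ j ∈ Finset.range n, if j + i < n then f j i else 0 :=
        Finset.sum_comm
    _ = ∑ i ∈ Finset.range n, ∑ j ∈ Finset.range (n - i), f j i := by
        refine Finset.sum_congr rfl fun i _ => ?_
        rw [key (fun a b => f b a) i]
        exact Finset.sum_congr rfl fun j _ => by rw [Nat.add_comm]

-- key unfolding of twistE, reindexed
lemma twistE_succ {K : Type*} [Field K] (q : ℕ) (c : ℕ → K) (t i : ℕ) (hit : i ≤ t) :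
    -(twistE q c (t + 1 - i) i)
      = ∑ j ∈ Finset.range (t + 1 - i), c (j+1) ^ q ^ (t+1) * twistE q c (t - j - i) i := by
  rw [show t + 1 - i = (t - i) + 1 by omega, twistE, neg_neg]
  rw [Finset.sum_attach (range ((t-i)+1))
    (fun s => twistE q c s i * c ((t-i) + 1 - s) ^ q ^ (i + (t-i) + 1))]
  rw [← Finset.sum_range_reflect]
  refine Finset.sum_congr rfl fun j hj => ?_
  rw [mem_range] at hj
  rw [show (t-i) + 1 - 1 - j = t - j - i by omega,
      show (t-i) + 1 - (t - j - i) = j + 1 by omega,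
      show i + (t-i) + 1 = t + 1 by omega, mul_comm]

lemma pow_q_expansion {Fq K : Type*} [Field Fq] [Fintype Fq] [Field K] [Algebra Fq K]
    (q k : ℕ) (hq : Fintype.card Fq = q)
    (S : Finset K) (hS : S.card = q ^ k) (c : ℕ → K)
    (hc : ∏ β ∈ S, (X - C β) = ∑ j ∈ range (k+1), C (c j) * X ^ q ^ (k - j))
    (hczero : ∀ j, k < j → c j = 0)
    (β : K) (hβ : β ∈ S) (t : ℕ) :
    β ^ q ^ (k + t)
      = ∑ i ∈ range (t+1), (-(twistE q c (t - i) i))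
          * ∑ j ∈ range k, c (j+1+i) ^ q ^ i * β ^ q ^ (k - 1 - j) := by
  induction t using Nat.strong_induction_on with
  | _ t ih =>
    match t with
    | 0 =>
      have h := pow_q_relation q k hq S hS c hc hczero β hβ 0 k le_rfl
      rw [h, Finset.sum_range_one]
      show _ = -(twistE q c 0 0) * _
      rw [twistE, neg_one_mul, neg_inj]
      refine Finset.sum_congr rfl fun j hj => ?_
      rw [mem_range] at hj
      rw [show k + 0 - (j+1) = k - 1 - j by omega, show j + 1 + 0 = j + 1 by omega]
    | (t+1) =>
      have h1 := pow_q_relation q k hq S hS c hc hczero β hβ (t+1) (t+1+k) (by omega)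
      rw [Finset.sum_range_add] at h1
      -- rewrite the two parts
      have e1 : ∑ j ∈ range (t+1), c (j+1) ^ q ^ (t+1) * β ^ q ^ (k + (t+1) - (j+1))
          = ∑ j ∈ range (t+1), -∑ i ∈ range (t+1-j),
              (c (j+1) ^ q ^ (t+1) * twistE q c (t - j - i) i)
                * ∑ j' ∈ range k, c (j'+1+i) ^ q ^ i * β ^ q ^ (k - 1 - j') := by
        refine Finset.sum_congr rfl fun j hj => ?_
        rw [mem_range] at hj
        rw [show k + (t+1) - (j+1) = k + (t - j) by omega, ih (t-j) (by omega), Finset.mul_sum]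
        rw [show t + 1 - j = (t - j) + 1 by omega, ← Finset.sum_neg_distrib]
        refine Finset.sum_congr rfl fun i _ => by ring
      have e2 : ∑ j ∈ range k, c (t+1+j+1) ^ q ^ (t+1) * β ^ q ^ (k + (t+1) - (t+1+j+1))
          = ∑ j ∈ range k, c (j+1+(t+1)) ^ q ^ (t+1) * β ^ q ^ (k - 1 - j) := by
        refine Finset.sum_congr rfl fun j hj => ?_
        rw [show t+1+j+1 = j+1+(t+1) by omega, show k + (t+1) - (j+1+(t+1)) = k - 1 - j by omega]
      rw [e1, e2, Finset.sum_neg_distrib, neg_add, neg_neg] at h1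
      rw [h1]
      rw [sum_triangle (t+1) (fun j i => (c (j+1) ^ q ^ (t+1) * twistE q c (t - j - i) i)
            * ∑ j' ∈ range k, c (j'+1+i) ^ q ^ i * β ^ q ^ (k - 1 - j'))]
      conv_rhs => rw [Finset.sum_range_succ]
      congr 1
      · refine Finset.sum_congr rfl fun i hi => ?_
        rw [mem_range] at hi
        rw [← Finset.sum_mul, ← twistE_succ q c t i (by omega), neg_mul]
      · rw [show t + 1 - (t+1) = 0 by omega, twistE, neg_one_mul]

lemma row_decomp {Fq K : Type*} [Field Fq] [Fintype Fq] [Field K] [Algebra Fq K]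
    (q k : ℕ) (hq : Fintype.card Fq = q)
    (S : Finset K) (hS : S.card = q ^ k) (c : ℕ → K)
    (hc : ∏ β ∈ S, (X - C β) = ∑ j ∈ range (k+1), C (c j) * X ^ q ^ (k - j))
    (hczero : ∀ j, k < j → c j = 0)
    (β : K) (hβ : β ∈ S) (t : ℕ) :
    β ^ q ^ (k + t)
      = ∑ h ∈ range k,
          (-∑ i ∈ range (min t h + 1), twistE q c (t - i) i * c (k - h + i) ^ q ^ i)
            * β ^ q ^ h := by
  have hq2 : 2 ≤ q := by rw [← hq]; exact Fintype.one_lt_card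
  rw [pow_q_expansion q k hq S hS c hc hczero β hβ t]
  have e1 : ∀ i : ℕ, ∑ j ∈ range k, c (j+1+i) ^ q ^ i * β ^ q ^ (k-1-j)
      = ∑ h ∈ range k, c (k-h+i) ^ q ^ i * β ^ q ^ h := by
    intro i
    rw [← Finset.sum_range_reflect (fun h => c (k-h+i) ^ q ^ i * β ^ q ^ h) k]
    refine Finset.sum_congr rfl fun j hj => ?_
    rw [mem_range] at hj
    rw [show j+1+i = k - (k-1-j) + i by omega]
  calc ∑ i ∈ range (t+1), (-(twistE q c (t-i) i))
          * ∑ j ∈ range k, c (j+1+i) ^ q^i * β ^ q^(k-1-j)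
      = ∑ i ∈ range (t+1), ∑ h ∈ range k,
          -(twistE q c (t-i) i * c (k-h+i) ^ q^i) * β ^ q ^ h := by
        refine Finset.sum_congr rfl fun i _ => ?_
        rw [e1 i, Finset.mul_sum]
        exact Finset.sum_congr rfl fun h _ => by ring
    _ = ∑ h ∈ range k, ∑ i ∈ range (t+1),
          -(twistE q c (t-i) i * c (k-h+i) ^ q^i) * β ^ q ^ h := Finset.sum_comm
    _ = ∑ h ∈ range k,
          (-∑ i ∈ range (min t h + 1), twistE q c (t-i) i * c (k-h+i) ^ q^i)
            * β ^ q ^ h := by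
        refine Finset.sum_congr rfl fun h hh => ?_
        rw [mem_range] at hh
        rw [← Finset.sum_mul, Finset.sum_neg_distrib]
        congr 2
        refine (Finset.sum_subset (Finset.range_subset_range.2
          (by omega : min t h + 1 ≤ t + 1)) fun i hi hi' => ?_).symm
        rw [mem_range] at hi hi'
        rw [hczero (k-h+i) (by omega), zero_pow (pow_pos (by omega : 0 < q) i).ne', mul_zero]

/-- `det M^{(h,k+t)} = g_h^{(t)} · det M`, where
`g_h^{(t)} = -∑_{i=0}^{min(t,h)} e_{t,i} c_{k-h+i}^{q^i}`, the `c_j` come from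
`∏_{β ∈ U}(X - β) = ∑_j c_j X^{q^{k-j}}` with `U = ⟨α_1,…,α_k⟩_{F_q}`. -/
theorem g_det_identity {Fq K : Type*} [Field Fq] [Fintype Fq] [Field K] [Fintype K]
    [Algebra Fq K] (q m k h t : ℕ) (hq : Fintype.card Fq = q)
    (hK : Fintype.card K = q ^ m) (hkm : k ≤ m) (hkt : k + t ≤ m) (hh : h < k)
    (α : ℕ → K) (hα : LinearIndependent Fq (fun i : Fin k => α (i:ℕ)))
    [DecidablePred (· ∈ Submodule.span Fq (Set.range (fun i : Fin k => α (i:ℕ))))]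
    (c : ℕ → K)
    (hc : ∏ β ∈ Finset.univ.filter (· ∈ Submodule.span Fq (Set.range (fun i : Fin k => α (i:ℕ)))),
            (Polynomial.X - Polynomial.C β)
          = ∑ j ∈ Finset.range (k+1), Polynomial.C (c j) * Polynomial.X ^ q ^ (k - j))
    (hczero : ∀ j, k < j → c j = 0) :
    Matrix.det (Matrix.of fun i j : Fin k =>
        if (i:ℕ) = h then α (j:ℕ) ^ q ^ (k + t) else α (j:ℕ) ^ q ^ (i:ℕ)) =
      (-∑ i ∈ Finset.range (min t h + 1), twistE q c (t - i) i * c (k - h + i) ^ q ^ i) *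
        Matrix.det (Matrix.of fun i j : Fin k => α (j:ℕ) ^ q ^ (i:ℕ)) := by
  have hcardU : Fintype.card (Submodule.span Fq (Set.range (fun i : Fin k => α (i:ℕ)))) = q ^ k := by
    rw [Module.card_eq_pow_finrank (K := Fq), hq, finrank_span_eq_card hα, Fintype.card_fin]
  have hS : (Finset.univ.filter
      (· ∈ Submodule.span Fq (Set.range (fun i : Fin k => α (i:ℕ))))).card = q ^ k := by
    rw [← hcardU]
    exact (Fintype.card_subtype _).symm
  set g : ℕ → K := fun h' =>
    -∑ i ∈ Finset.range (min t h' + 1), twistE q c (t - i) i * c (k - h' + i) ^ q ^ i with hg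
  set M : Matrix (Fin k) (Fin k) K := Matrix.of fun i j : Fin k => α (j:ℕ) ^ q ^ (i:ℕ) with hM
  have hrow : ∀ j : Fin k,
      α (j:ℕ) ^ q ^ (k + t) = ∑ h' : Fin k, g (h':ℕ) * α (j:ℕ) ^ q ^ (h':ℕ) := by
    intro j
    rw [row_decomp q k hq _ hS c hc hczero (α (j:ℕ))
      (Finset.mem_filter.2 ⟨Finset.mem_univ _, Submodule.subset_span ⟨j, rfl⟩⟩) t]
    exact (Fin.sum_univ_eq_sum_range (fun h' => g h' * α (j:ℕ) ^ q ^ h') k).symm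
  have hMat : (Matrix.of fun i j : Fin k =>
        if (i:ℕ) = h then α (j:ℕ) ^ q ^ (k + t) else α (j:ℕ) ^ q ^ (i:ℕ))
      = M.updateRow ⟨h, hh⟩ (∑ h' : Fin k, g (h':ℕ) • M h') := by
    ext i j
    by_cases hih : i = ⟨h, hh⟩
    · subst hih
      rw [Matrix.updateRow_self]
      simp only [Matrix.of_apply, if_pos rfl, Finset.sum_apply, Pi.smul_apply, smul_eq_mul]
      exact hrow j
    · rw [Matrix.updateRow_ne hih]
      simp only [Matrix.of_apply, hM]
      rw [if_neg (fun hc' => hih (Fin.ext hc'))]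
  rw [hMat, Matrix.det_updateRow_sum M ⟨h, hh⟩ (fun h' => g (h':ℕ))]
  rw [smul_eq_mul]
end

section
/- Let q be a prime power, k < n ≤ m, α_1,...,α_n ∈ F_{q^m} linearly independent over F_q, η ∈ F_{q^m}*, 0 ≤ h ≤ k-1. Consider the twisted Gabidulin code C₁ with t = 0, i.e., the row (α_j^{q^h} + η α_j^{q^k})_j replaces row h of the Moore matrix. If η^{-1} = c_{k-h}, where ∏_{α ∈ ⟨α_1,...,α_k⟩_{F_q}}(x-α) = ∑_{j=0}^k c_j x^{q^{k-j}}, then C₁ is not MRD. -/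
open Finset Polynomial

/-! Let `f = ∏_{β ∈ V} (X - β) = ∑ c_j X^{q^{k-j}}` be the subspace polynomial of
`V = ⟨α_1, …, α_k⟩`; it has degree `|V| = q^k`, so `c_0 = 1`. The vector `(f(α_j))_j` is the
combination `∑_{i<k} c_{k-i} g_i` of the rows `g_i` of the generator matrix: the twist of row `h`
contributes `c_{k-h} η α_j^{q^k} = α_j^{q^k}`, which is exactly the leading term of `f`. This
codeword vanishes at `α_1, …, α_k` but not at `α_{k+1}`, so its entries span an `F_q`-space of
dimension at most `n - k`. -/

theorem finrank_span_range_le_card_of_eq_zero {R M ι : Type*} [DivisionRing R] [AddCommGroup M]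
    [Module R M] (v : ι → M) (s : Finset ι) (hv : ∀ i ∉ s, v i = 0) :
    Module.finrank R (Submodule.span R (Set.range v)) ≤ s.card := by
  have hle : Submodule.span R (Set.range v) ≤ Submodule.span R (Set.range fun i : s => v i) := by
    rw [Submodule.span_le]
    rintro _ ⟨i, rfl⟩
    by_cases hi : i ∈ s
    · exact Submodule.subset_span ⟨⟨i, hi⟩, rfl⟩
    · simp [hv i hi]
  have : FiniteDimensional R (Submodule.span R (Set.range fun i : s => v i)) :=
    FiniteDimensional.span_of_finite R (Set.finite_range _)
  calc Module.finrank R (Submodule.span R (Set.range v))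
      ≤ Module.finrank R (Submodule.span R (Set.range fun i : s => v i)) :=
        Submodule.finrank_mono hle
    _ ≤ s.card := (finrank_range_le_card _).trans_eq (Fintype.card_coe s)

theorem notMem_span_range_fin_of_linearIndependent {R M : Type*} [Ring R] [Nontrivial R]
    [AddCommGroup M] [Module R M] {n k : ℕ} {α : ℕ → M}
    (hα : LinearIndependent R fun i : Fin n => α i) (hkn : k < n) :
    α k ∉ Submodule.span R (Set.range fun i : Fin k => α i) := by
  have himage : (fun i : Fin n => α i) '' {j | (j : ℕ) < k} = Set.range fun i : Fin k => α i := by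
    ext x
    constructor
    · rintro ⟨j, hj, rfl⟩
      exact ⟨⟨j, hj⟩, rfl⟩
    · rintro ⟨i, rfl⟩
      exact ⟨⟨i, i.2.trans hkn⟩, i.2, rfl⟩
  rw [← himage]
  exact hα.notMem_span_image (x := ⟨k, hkn⟩) (by simp)

section SubspacePolynomial

variable {Fq K : Type*} [Field Fq] [Field K] [Fintype K] [Algebra Fq K]
  (V : Submodule Fq K) [DecidablePred (· ∈ V)]

theorem card_filter_mem_submodule [Fintype Fq] :
    (univ.filter (· ∈ V)).card = Fintype.card Fq ^ Module.finrank Fq V := by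
  rw [← Module.card_eq_pow_finrank, Fintype.card_subtype]

theorem natDegree_prod_X_sub_C_filter_mem_submodule [Fintype Fq] :
    (∏ β ∈ univ.filter (· ∈ V), (X - C β)).natDegree = Fintype.card Fq ^ Module.finrank Fq V := by
  rw [natDegree_finsetProd_X_sub_C_eq_card, card_filter_mem_submodule]

theorem eval_prod_X_sub_C_filter_mem_submodule_eq_zero_iff (x : K) :
    (∏ β ∈ univ.filter (· ∈ V), (X - C β)).eval x = 0 ↔ x ∈ V := by
  simp [eval_prod, Finset.prod_eq_zero_iff, sub_eq_zero]

end SubspacePolynomial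

section LinearizedPolynomial

variable {K : Type*} [CommRing K] (q k : ℕ) (c : ℕ → K)

theorem coeff_sum_C_mul_X_pow_pow_top (hq : 1 < q) :
    (∑ j ∈ range (k + 1), C (c j) * X ^ q ^ (k - j)).coeff (q ^ k) = c 0 := by
  rw [finsetSum_coeff, Finset.sum_eq_single 0]
  · simp
  · intro j hj hj0
    have : q ^ (k - j) ≠ q ^ k :=
      (Nat.pow_lt_pow_right hq (by simp at hj; omega)).ne
    simp [coeff_X_pow, this.symm]
  · simp

theorem eval_sum_C_mul_X_pow_pow (x : K) :
    (∑ j ∈ range (k + 1), C (c j) * X ^ q ^ (k - j)).eval x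
      = ∑ i ∈ range (k + 1), c (k - i) * x ^ q ^ i := by
  rw [eval_finsetSum, ← Finset.sum_range_reflect]
  refine Finset.sum_congr rfl fun i hi => ?_
  have : k - (k - i) = i := by simp at hi; omega
  simp [this]

end LinearizedPolynomial

section TwistedMoore

variable {K : Type*} [CommRing K]

def twistedMooreRow (q k h : ℕ) (η : K) (α : ℕ → K) (n : ℕ) (i : Fin k) : Fin n → K :=
  fun j => if (i : ℕ) = h then α j ^ q ^ h + η * α j ^ q ^ k else α j ^ q ^ (i : ℕ)

theorem sum_mul_twistedMooreRow {q k h n : ℕ} {η : K} {α : ℕ → K} (a : ℕ → K) (hh : h < k)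
    (htop : a k = 1) (hη : a h * η = 1) (j : Fin n) :
    ∑ i : Fin k, a i * twistedMooreRow q k h η α n i j
      = ∑ i ∈ range (k + 1), a i * α j ^ q ^ i := by
  have hsplit : ∀ i : Fin k, a i * twistedMooreRow q k h η α n i j
      = a i * α j ^ q ^ (i : ℕ) + if (i : ℕ) = h then a h * η * α j ^ q ^ k else 0 := by
    intro i
    unfold twistedMooreRow
    split_ifs with hi
    · subst hi; ring
    · ring
  rw [Finset.sum_congr rfl fun i _ => hsplit i, sum_add_distrib, hη, sum_range_succ, htop,
    one_mul, Fin.sum_univ_eq_sum_range (fun i => a i * α j ^ q ^ i),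
    Fin.sum_univ_eq_sum_range (fun i => if i = h then α j ^ q ^ k else 0),
    sum_ite_eq' _ _ _, if_pos (mem_range.mpr hh)]

theorem sum_mul_pow_mem_span_twistedMooreRow {q k h n : ℕ} {η : K} {α : ℕ → K} (a : ℕ → K)
    (hh : h < k) (htop : a k = 1) (hη : a h * η = 1) :
    (fun j : Fin n => ∑ i ∈ range (k + 1), a i * α j ^ q ^ i)
      ∈ Submodule.span K (Set.range (twistedMooreRow q k h η α n)) := by
  have : (fun j : Fin n => ∑ i ∈ range (k + 1), a i * α j ^ q ^ i)
      = ∑ i : Fin k, a i • twistedMooreRow q k h η α n i := by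
    ext j
    simp [Finset.sum_apply, sum_mul_twistedMooreRow a hh htop hη]
  rw [this]
  exact Submodule.sum_mem _ fun i _ => Submodule.smul_mem _ _ (Submodule.subset_span ⟨i, rfl⟩)

end TwistedMoore

theorem C1_t0_not_MRD_general {Fq K : Type*} [Field Fq] [Fintype Fq] [Field K] [Fintype K]
    [Algebra Fq K] (q n k h : ℕ) (hq : Fintype.card Fq = q)
    (hkn : k < n) (hh : h < k)
    (α : ℕ → K) (hα : LinearIndependent Fq (fun i : Fin n => α (i:ℕ)))
    [DecidablePred (· ∈ Submodule.span Fq (Set.range (fun i : Fin k => α (i:ℕ))))]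
    (c : ℕ → K)
    (hc : ∏ β ∈ Finset.univ.filter (· ∈ Submodule.span Fq (Set.range (fun i : Fin k => α (i:ℕ)))),
            (Polynomial.X - Polynomial.C β)
          = ∑ j ∈ Finset.range (k+1), Polynomial.C (c j) * Polynomial.X ^ q ^ (k - j))
    (η : K) (hη : η ≠ 0) (hinv : η⁻¹ = c (k - h)) :
    ¬ (sInf {w : ℕ | ∃ c' ∈ Submodule.span K (Set.range (fun i : Fin k => fun j : Fin n =>
          if (i:ℕ) = h then α (j:ℕ) ^ q ^ h + η * α (j:ℕ) ^ q ^ k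
          else α (j:ℕ) ^ q ^ (i:ℕ))),
        c' ≠ 0 ∧ w = Module.finrank Fq (Submodule.span Fq (Set.range c'))} = n - k + 1) := by
  have hfinrank : Module.finrank Fq (Submodule.span Fq (Set.range fun i : Fin k => α i)) = k :=
    (finrank_span_eq_card (hα.comp (Fin.castLE hkn.le) (Fin.castLE_injective _))).trans
      (Fintype.card_fin k)
  have hc0 : c 0 = 1 := by
    have htop := (monic_prod_X_sub_C (fun β => β)
      (univ.filter (· ∈ Submodule.span Fq (Set.range fun i : Fin k => α i)))).coeff_natDegree
    rwa [natDegree_prod_X_sub_C_filter_mem_submodule, hq, hfinrank, hc,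
      coeff_sum_C_mul_X_pow_pow_top q k c (hq ▸ Fintype.one_lt_card)] at htop
  let v : Fin n → K := fun j =>
    (∏ β ∈ univ.filter (· ∈ Submodule.span Fq (Set.range fun i : Fin k => α i)),
      (X - C β)).eval (α j)
  have hv_mem : v ∈ Submodule.span K (Set.range (twistedMooreRow q k h η α n)) := by
    simp only [v, hc, eval_sum_C_mul_X_pow_pow]
    refine sum_mul_pow_mem_span_twistedMooreRow (fun i => c (k - i)) hh (by simpa using hc0) ?_
    rw [← hinv, inv_mul_cancel₀ hη]
  have hv_ne : v ≠ 0 := fun hv0 =>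
    notMem_span_range_fin_of_linearIndependent hα hkn <|
      (eval_prod_X_sub_C_filter_mem_submodule_eq_zero_iff _ _).mp (congrFun hv0 ⟨k, hkn⟩)
  have hv_rank : Module.finrank Fq (Submodule.span Fq (Set.range v)) ≤ n - k := by
    refine (finrank_span_range_le_card_of_eq_zero v (Ici (⟨k, hkn⟩ : Fin n))
      fun j hj => ?_).trans_eq (Fin.card_Ici _)
    refine (eval_prod_X_sub_C_filter_mem_submodule_eq_zero_iff _ _).mpr
      (Submodule.subset_span ⟨⟨j, ?_⟩, rfl⟩)
    simpa [Fin.le_def] using hj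
  intro hmin
  have hmin_le : n - k + 1 ≤ Module.finrank Fq (Submodule.span Fq (Set.range v)) :=
    hmin ▸ Nat.sInf_le ⟨v, hv_mem, hv_ne, rfl⟩
  omega

/-- for the one-twist twisted Gabidulin code with `t = 0`, if
`η⁻¹ = c_{k-h}` where `∏_{β ∈ ⟨α_1,…,α_k⟩_{F_q}}(X - β) = ∑_{j=0}^k c_j X^{q^{k-j}}`,
then `C₁` is not MRD. -/
theorem C1_t0_not_MRD {Fq K : Type*} [Field Fq] [Fintype Fq] [Field K] [Fintype K]
    [Algebra Fq K] (q m n k h : ℕ) (hq : Fintype.card Fq = q)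
    (hK : Fintype.card K = q ^ m) (hkn : k < n) (hnm : n ≤ m) (hh : h < k)
    (α : ℕ → K) (hα : LinearIndependent Fq (fun i : Fin n => α (i:ℕ)))
    [DecidablePred (· ∈ Submodule.span Fq (Set.range (fun i : Fin k => α (i:ℕ))))]
    (c : ℕ → K)
    (hc : ∏ β ∈ Finset.univ.filter (· ∈ Submodule.span Fq (Set.range (fun i : Fin k => α (i:ℕ)))),
            (Polynomial.X - Polynomial.C β)
          = ∑ j ∈ Finset.range (k+1), Polynomial.C (c j) * Polynomial.X ^ q ^ (k - j))
    (η : K) (hη : η ≠ 0) (hinv : η⁻¹ = c (k - h)) :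
    ¬ (sInf {w : ℕ | ∃ c' ∈ Submodule.span K (Set.range (fun i : Fin k => fun j : Fin n =>
          if (i:ℕ) = h then α (j:ℕ) ^ q ^ h + η * α (j:ℕ) ^ q ^ k
          else α (j:ℕ) ^ q ^ (i:ℕ))),
        c' ≠ 0 ∧ w = Module.finrank Fq (Submodule.span Fq (Set.range c'))} = n - k + 1) :=
  C1_t0_not_MRD_general q n k h hq hkn hh α hα c hc η hη hinv
end

section
/- Let q be a prime power, k < n ≤ m, and let α = (α_1,...,α_n) ∈ F_{q^m}^n have rank n over F_q. For 0 ≤ h ≤ k-1, suppose f(x) = ∑_{i=0}^{k-1} f_i x^{q^i} + η f_h x^{q^k} with f_h ≠ 0 (so f has q-degree k) satisfies N(f_0) ≠ (-1)^{mk} N(η) N(f_h), where N(x) = x^{(q^m-1)/(q-1)} is the norm from F_{q^m} to F_q. Then the kernel of f in F_{q^m} has F_q-dimension at most k-1; consequently the codeword (f(α_1),...,f(α_n)) has rank weight at least n-k+1. -/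
/-
If the `q`-polynomial `L = ∑_{i ≤ k} a_i x^{q^i}` (with `a_k ≠ 0`) vanishes on an
`F_q`-subspace `U` of dimension `k`, then `U` is its full set of `q^k` roots, so
`L = a_k ∏_{u ∈ U} (x - u)` and comparing coefficients of `x` gives
`a_0 = a_k ∏_{u ∈ U \ 0} (-u)`. Splitting `U \ 0` into its `(q^k - 1)/(q - 1)` orbits under
`F_q^*`, each of which has product `-u^{q-1}`, and taking norms `N(x) = x^{(q^m-1)/(q-1)}`, which
kill `(q-1)`-th powers and send `-1` to `(-1)^m`, yields Sheekey's identity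
`N(a_0) = (-1)^{mk} N(a_k)`. So under the norm condition the kernel of `f` has dimension at most
`k - 1` (it is at most `k` by counting roots), and rank–nullity on `⟨α_1, …, α_n⟩` bounds the
rank weight of the codeword.
-/

open Finset Polynomial

section LinearizedPoly

variable {K : Type*} [Field K]

noncomputable def linearizedPoly (q : ℕ) (a : ℕ → K) (k : ℕ) : K[X] :=
  ∑ i ∈ range (k + 1), C (a i) * X ^ q ^ i

variable {q : ℕ} (a : ℕ → K) (k : ℕ)

theorem coeff_linearizedPoly_pow (hq : 1 < q) {j : ℕ} (hj : j ≤ k) :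
    (linearizedPoly q a k).coeff (q ^ j) = a j := by
  simp [linearizedPoly, Nat.pow_right_inj hq, hj]

theorem natDegree_linearizedPoly_le (hq : 1 < q) : (linearizedPoly q a k).natDegree ≤ q ^ k :=
  natDegree_sum_le_of_forall_le _ _ fun i hi => (natDegree_C_mul_X_pow_le _ _).trans <|
    Nat.pow_le_pow_right (by omega) (Nat.lt_succ_iff.1 (mem_range.1 hi))

theorem natDegree_linearizedPoly (hq : 1 < q) (ha : a k ≠ 0) :
    (linearizedPoly q a k).natDegree = q ^ k :=
  natDegree_eq_of_le_of_coeff_ne_zero (natDegree_linearizedPoly_le a k hq)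
    (by rwa [coeff_linearizedPoly_pow a k hq le_rfl])

theorem leadingCoeff_linearizedPoly (hq : 1 < q) (ha : a k ≠ 0) :
    (linearizedPoly q a k).leadingCoeff = a k := by
  rw [leadingCoeff, natDegree_linearizedPoly a k hq ha, coeff_linearizedPoly_pow a k hq le_rfl]

theorem coeff_one_linearizedPoly (hq : 1 < q) : (linearizedPoly q a k).coeff 1 = a 0 := by
  simpa using coeff_linearizedPoly_pow a k hq (Nat.zero_le k)

end LinearizedPoly

theorem coeff_one_C_mul_prod_X_sub_C {K : Type*} [Field K] [DecidableEq K] (b : K)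
    {T : Finset K} (h0 : 0 ∈ T) :
    (C b * ∏ u ∈ T, (X - C u)).coeff 1 = b * ∏ u ∈ T.erase 0, -u := by
  rw [← mul_prod_erase T _ h0, coeff_C_mul, map_zero, sub_zero, coeff_X_mul,
    coeff_zero_eq_eval_zero, eval_prod]
  simp

section FiniteField

variable {Fq K : Type*} [Field Fq] [Fintype Fq] [Field K] [Algebra Fq K]

theorem prod_units_smul_eq_neg_pow [DecidableEq Fq] (u : K) :
    ∏ c : Fqˣ, c • u = -u ^ (Fintype.card Fq - 1) := by
  simp_rw [Units.smul_def, Algebra.smul_def]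
  rw [prod_mul_distrib, prod_const, card_univ, Fintype.card_units, ← map_prod,
    ← Units.coe_prod, FiniteField.prod_univ_units_id_eq_neg_one]
  simp

theorem exists_prod_eq_neg_one_pow_mul_pow (S : Finset K) (h0 : (0 : K) ∉ S)
    (hS : ∀ u ∈ S, ∀ c : Fqˣ, c • u ∈ S) :
    ∃ t : ℕ, ∃ Q : K, #S = t * (Fintype.card Fq - 1) ∧ Q ≠ 0 ∧
      ∏ u ∈ S, u = (-1) ^ t * Q ^ (Fintype.card Fq - 1) := by
  classical
  induction S using Finset.strongInduction with
  | H S ih =>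
  rcases S.eq_empty_or_nonempty with rfl | ⟨u, hu⟩
  · exact ⟨0, 1, by simp⟩
  have hu0 : u ≠ 0 := ne_of_mem_of_not_mem hu h0
  set O := univ.image fun c : Fqˣ => c • u
  have hinj : Function.Injective fun c : Fqˣ => c • u := fun c d hcd =>
    Units.ext (smul_left_injective Fq hu0 hcd)
  have hOS : O ⊆ S := by
    simp only [O, image_subset_iff]
    exact fun c _ => hS u hu c
  have huO : u ∈ O := mem_image.2 ⟨1, mem_univ _, one_smul _ _⟩
  have hrest : ∀ v ∈ S \ O, ∀ c : Fqˣ, c • v ∈ S \ O := by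
    intro v hv c
    simp only [O, mem_sdiff, mem_image, mem_univ, true_and, not_exists] at hv ⊢
    refine ⟨hS v hv.1 c, fun d hd => hv.2 (c⁻¹ * d) ?_⟩
    rw [mul_smul, hd, inv_smul_smul]
  obtain ⟨t, Q, hcard, hQ, hprod⟩ :=
    ih (S \ O) (sdiff_ssubset hOS ⟨u, huO⟩) (fun h => h0 (mem_sdiff.1 h).1) hrest
  refine ⟨t + 1, u * Q, ?_, mul_ne_zero hu0 hQ, ?_⟩
  · rw [← card_sdiff_add_card_eq_card hOS, hcard, card_image_of_injective _ hinj, card_univ,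
      Fintype.card_units]
    ring
  · rw [← prod_sdiff hOS, hprod, prod_image fun c _ d _ h => hinj h, prod_units_smul_eq_neg_pow]
    ring

theorem neg_one_pow_card_pow (i : ℕ) : (-1 : K) ^ Fintype.card Fq ^ i = -1 := by
  simpa using congrArg (algebraMap Fq K) (FiniteField.pow_card_pow i (-1 : Fq))

theorem neg_one_pow_card_sub_one : (-1 : K) ^ (Fintype.card Fq - 1) = 1 := by
  simpa using congrArg (algebraMap Fq K)
    (FiniteField.pow_card_sub_one_eq_one (-1 : Fq) (neg_ne_zero.2 one_ne_zero))

theorem neg_one_pow_geom_sum (j : ℕ) :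
    (-1 : K) ^ ∑ i ∈ range j, Fintype.card Fq ^ i = (-1) ^ j := by
  rw [← prod_pow_eq_pow_sum]
  simp [neg_one_pow_card_pow]

variable (Fq) in
noncomputable def linearizedMap (a : ℕ → K) (k : ℕ) : K →ₗ[Fq] K :=
  ∑ i ∈ range (k + 1), a i • (FiniteField.frobeniusAlgHom Fq K ^ i).toLinearMap

variable (Fq) in
theorem linearizedMap_apply (a : ℕ → K) (k : ℕ) (x : K) :
    linearizedMap Fq a k x = (linearizedPoly (Fintype.card Fq) a k).eval x := by
  simp [linearizedMap, linearizedPoly, eval_finsetSum, FiniteField.coe_frobeniusAlgHom,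
    pow_iterate]

variable [Fintype K]

theorem norm_prod_neg_eq_neg_one_pow {m k : ℕ} (hK : Fintype.card K = Fintype.card Fq ^ m)
    (S : Finset K) (h0 : (0 : K) ∉ S) (hS : ∀ u ∈ S, ∀ c : Fqˣ, c • u ∈ S)
    (hSk : #S = Fintype.card Fq ^ k - 1) :
    (∏ u ∈ S, -u) ^ ((Fintype.card Fq ^ m - 1) / (Fintype.card Fq - 1)) = (-1) ^ (m * k) := by
  set q := Fintype.card Fq
  have hq : 2 ≤ q := Fintype.one_lt_card
  obtain ⟨t, Q, hSt, hQ, hprod⟩ := exists_prod_eq_neg_one_pow_mul_pow S h0 hS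
  have hsign : (-1 : K) ^ #S = 1 := by
    rw [hSt, pow_mul', neg_one_pow_card_sub_one, one_pow]
  have ht : t = ∑ i ∈ range k, q ^ i := by
    rw [Nat.geomSum_eq hq, ← hSk, hSt, Nat.mul_div_cancel _ (by omega)]
  have hsign_t : ((-1 : K) ^ t) ^ ((q ^ m - 1) / (q - 1)) = (-1) ^ (m * k) := by
    rw [ht, neg_one_pow_geom_sum, ← Nat.geomSum_eq hq, ← pow_mul, mul_comm k, pow_mul,
      neg_one_pow_geom_sum, ← pow_mul]
  have hQ1 : (Q ^ (q - 1)) ^ ((q ^ m - 1) / (q - 1)) = 1 := by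
    rw [← pow_mul, Nat.mul_div_cancel' (Nat.sub_one_dvd_pow_sub_one q m), ← hK,
      FiniteField.pow_card_sub_one_eq_one Q hQ]
  rw [prod_neg, hsign, one_mul, hprod, mul_pow, hsign_t, hQ1, mul_one]

theorem norm_coeff_zero_eq_of_finrank_eq {m k : ℕ} (hK : Fintype.card K = Fintype.card Fq ^ m)
    {a : ℕ → K} (ha : a k ≠ 0) (U : Submodule Fq K)
    (hU : ∀ x ∈ U, (linearizedPoly (Fintype.card Fq) a k).eval x = 0)
    (hUk : Module.finrank Fq U = k) :
    a 0 ^ ((Fintype.card Fq ^ m - 1) / (Fintype.card Fq - 1)) =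
      (-1) ^ (m * k) * a k ^ ((Fintype.card Fq ^ m - 1) / (Fintype.card Fq - 1)) := by
  classical
  set q := Fintype.card Fq
  have hq : 1 < q := Fintype.one_lt_card
  set p := linearizedPoly q a k
  set T := univ.filter (· ∈ U)
  have hT : #T = q ^ k := by
    rw [← hUk, ← Module.card_eq_pow_finrank, ← Fintype.card_subtype]
  have hp : p ≠ 0 := leadingCoeff_ne_zero.1 (by rwa [leadingCoeff_linearizedPoly a k hq ha])
  have hroots : p.roots = T.val :=
    roots_eq_of_natDegree_le_card_of_ne_zero (by simpa [T] using hU)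
      (by rw [hT, natDegree_linearizedPoly a k hq ha]) hp
  have hsplit : C (a k) * ∏ u ∈ T, (X - C u) = p := by
    rw [← leadingCoeff_linearizedPoly a k hq ha, prod_eq_multiset_prod, ← hroots]
    refine C_leadingCoeff_mul_prod_multiset_X_sub_C ?_
    rw [hroots, natDegree_linearizedPoly a k hq ha, ← hT, card_val]
  have h0 : (0 : K) ∈ T := by simp [T, U.zero_mem]
  have hcoeff := coeff_one_C_mul_prod_X_sub_C (a k) h0
  rw [hsplit, coeff_one_linearizedPoly a k hq] at hcoeff
  have hS : ∀ u ∈ T.erase 0, ∀ c : Fqˣ, c • u ∈ T.erase 0 := by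
    intro u hu c
    simp only [T, mem_erase, mem_filter, mem_univ, true_and] at hu ⊢
    exact ⟨smul_ne_zero_iff_ne c |>.2 hu.1, U.smul_of_tower_mem c hu.2⟩
  rw [hcoeff, mul_pow, norm_prod_neg_eq_neg_one_pow hK _ (notMem_erase 0 T) hS
    (by rw [card_erase_of_mem h0, hT]), mul_comm]

theorem card_pow_finrank_le_natDegree {p : K[X]} (hp : p ≠ 0) (U : Submodule Fq K)
    (hU : ∀ x ∈ U, p.eval x = 0) : Fintype.card Fq ^ Module.finrank Fq U ≤ p.natDegree := by
  classical
  rw [← Module.card_eq_pow_finrank]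
  exact (Fintype.card_subtype _).trans_le <|
    card_le_degree_of_subset_roots fun x hx => (mem_roots hp).2 (hU x (by simpa using hx))

theorem finrank_le_sub_one_of_norm_ne {m k : ℕ} (hK : Fintype.card K = Fintype.card Fq ^ m)
    {a : ℕ → K} (ha : a k ≠ 0)
    (hN : a 0 ^ ((Fintype.card Fq ^ m - 1) / (Fintype.card Fq - 1)) ≠
      (-1) ^ (m * k) * a k ^ ((Fintype.card Fq ^ m - 1) / (Fintype.card Fq - 1)))
    (U : Submodule Fq K) (hU : ∀ x ∈ U, (linearizedPoly (Fintype.card Fq) a k).eval x = 0) :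
    Module.finrank Fq U ≤ k - 1 := by
  have hq : 1 < Fintype.card Fq := Fintype.one_lt_card
  have hp : linearizedPoly (Fintype.card Fq) a k ≠ 0 :=
    leadingCoeff_ne_zero.1 (by rwa [leadingCoeff_linearizedPoly a k hq ha])
  have hle := card_pow_finrank_le_natDegree hp U hU
  rw [natDegree_linearizedPoly a k hq ha, Nat.pow_le_pow_iff_right hq] at hle
  have hne : Module.finrank Fq U ≠ k := fun h => hN (norm_coeff_zero_eq_of_finrank_eq hK ha U hU h)
  omega

end FiniteField

theorem finrank_map_add_finrank_inf_ker {F V W : Type*} [Field F] [AddCommGroup V] [Module F V]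
    [AddCommGroup W] [Module F W] (f : V →ₗ[F] W) (P : Submodule F V) [FiniteDimensional F P] :
    Module.finrank F (P.map f) + Module.finrank F ↥(P ⊓ LinearMap.ker f) = Module.finrank F P := by
  rw [← (f.domRestrict P).finrank_range_add_finrank_ker, LinearMap.range_domRestrict,
    LinearMap.ker_domRestrict, ← Submodule.map_comap_subtype, Submodule.finrank_map_subtype_eq]

theorem norm_condition_MRD_general {Fq K : Type*} [Field Fq] [Fintype Fq] [Field K] [Fintype K]
    [Algebra Fq K] (q m n k h : ℕ) (hq : Fintype.card Fq = q)
    (hK : Fintype.card K = q ^ m) (hkn : k < n) (hh : h < k)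
    (α : ℕ → K) (hα : LinearIndependent Fq (fun i : Fin n => α (i:ℕ)))
    (η : K) (hη : η ≠ 0) (fc : ℕ → K) (hfh : fc h ≠ 0)
    (hN : fc 0 ^ ((q ^ m - 1) / (q - 1)) ≠
      (-1 : K) ^ (m * k) * η ^ ((q ^ m - 1) / (q - 1)) * fc h ^ ((q ^ m - 1) / (q - 1))) :
    (∀ U : Submodule Fq K,
        (∀ x ∈ U, (∑ i ∈ Finset.range k, fc i * x ^ q ^ i) + η * fc h * x ^ q ^ k = 0) →
        Module.finrank Fq U ≤ k - 1) ∧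
    n - k + 1 ≤ Module.finrank Fq (Submodule.span Fq (Set.range (fun j : Fin n =>
      (∑ i ∈ Finset.range k, fc i * α (j:ℕ) ^ q ^ i) + η * fc h * α (j:ℕ) ^ q ^ k))) := by
  subst hq
  set a := Function.update fc k (η * fc h)
  set L := linearizedMap Fq a k
  have hL : ∀ x, (∑ i ∈ range k, fc i * x ^ Fintype.card Fq ^ i) +
      η * fc h * x ^ Fintype.card Fq ^ k = L x := by
    intro x
    rw [linearizedMap_apply, linearizedPoly, eval_finsetSum, sum_range_succ]
    congr 1
    · refine sum_congr rfl fun i hi => ?_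
      simp [a, Function.update_of_ne (mem_range.1 hi).ne]
    · simp [a]
  have hker : ∀ U : Submodule Fq K, (∀ x ∈ U, L x = 0) → Module.finrank Fq U ≤ k - 1 := by
    have hak : a k = η * fc h := Function.update_self ..
    have ha0 : a 0 = fc 0 := Function.update_of_ne (by omega) ..
    refine fun U hU => finrank_le_sub_one_of_norm_ne hK (hak ▸ mul_ne_zero hη hfh) ?_ U
      fun x hx => by rw [← linearizedMap_apply, hU x hx]
    rwa [ha0, hak, mul_pow, ← mul_assoc]
  refine ⟨fun U hU => hker U fun x hx => by rw [← hL, hU x hx], ?_⟩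
  set W := Submodule.span Fq (Set.range fun j : Fin n => α j)
  have hcodeword : Submodule.span Fq (Set.range fun j : Fin n =>
      (∑ i ∈ range k, fc i * α j ^ Fintype.card Fq ^ i) + η * fc h * α j ^ Fintype.card Fq ^ k) =
      W.map L := by
    rw [Submodule.map_span, ← Set.range_comp]
    exact congrArg _ (congrArg _ (funext fun j => hL (α j)))
  have hrank := finrank_map_add_finrank_inf_ker L W
  rw [← hcodeword, finrank_span_eq_card hα, Fintype.card_fin] at hrank
  have hinf := hker (W ⊓ LinearMap.ker L) fun x hx => (Submodule.mem_inf.1 hx).2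
  omega

/-- for `f(x) = ∑_{i<k} f_i x^{q^i} + η f_h x^{q^k}` with `f_h ≠ 0`, if
`N(f_0) ≠ (-1)^{mk} N(η) N(f_h)` (norm from `F_{q^m}` to `F_q`), then every `F_q`-subspace
of `K` contained in the kernel of `f` has dimension at most `k-1`; consequently the
codeword `(f(α_1),…,f(α_n))` has rank weight at least `n-k+1`. -/
theorem norm_condition_MRD {Fq K : Type*} [Field Fq] [Fintype Fq] [Field K] [Fintype K]
    [Algebra Fq K] (q m n k h : ℕ) (hq : Fintype.card Fq = q)
    (hK : Fintype.card K = q ^ m) (hkn : k < n) (hnm : n ≤ m) (hh : h < k)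
    (α : ℕ → K) (hα : LinearIndependent Fq (fun i : Fin n => α (i:ℕ)))
    (η : K) (hη : η ≠ 0) (fc : ℕ → K) (hfh : fc h ≠ 0)
    (hN : fc 0 ^ ((q ^ m - 1) / (q - 1)) ≠
      (-1 : K) ^ (m * k) * η ^ ((q ^ m - 1) / (q - 1)) * fc h ^ ((q ^ m - 1) / (q - 1))) :
    (∀ U : Submodule Fq K,
        (∀ x ∈ U, (∑ i ∈ Finset.range k, fc i * x ^ q ^ i) + η * fc h * x ^ q ^ k = 0) →
        Module.finrank Fq U ≤ k - 1) ∧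
    n - k + 1 ≤ Module.finrank Fq (Submodule.span Fq (Set.range (fun j : Fin n =>
      (∑ i ∈ Finset.range k, fc i * α (j:ℕ) ^ q ^ i) + η * fc h * α (j:ℕ) ^ q ^ k))) :=
  norm_condition_MRD_general q m n k h hq hK hkn hh α hα η hη fc hfh hN
end

section
/- Let q be a prime power and s₁, s₂, m positive integers with n ≤ s₁, s₁ | s₂, s₂ | m, and F_q ⊊ F_{q^{s₁}} ⊊ F_{q^{s₂}} ⊊ F_{q^m} a proper chain of subfields. Let k < n, let α_1,...,α_n ∈ F_{q^{s₁}} be linearly independent over F_q, let η₁ ∈ F_{q^{s₂}} \ F_{q^{s₁}} and η₂ ∈ F_{q^m} \ F_{q^{s₂}}. Fix 0 ≤ h ≤ k-1 and 0 ≤ t₁ < t₂ ≤ n-k-1. Then the twisted Gabidulin code C₂ with two twists, generated by the Moore matrix rows (α_j^{q^i})_j for i ≠ h together with the row (α_j^{q^h} + η₁ α_j^{q^{k+t₁}} + η₂ α_j^{q^{k+t₂}})_j, is an MRD code over F_{q^m}. -/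
/-!
A codeword of `C₂` is the evaluation at the points `β j ∈ F_{q^{s₁}}` of the `F_q`-linear map
`f(x) = ∑_{i<k} c_i x^{q^i} + c_h (η₁ x^{q^{k+t₁}} + η₂ x^{q^{k+t₂}})`. If its rank weight is at
most `n - k`, then `f` vanishes at `k` points `u_j ∈ F_{q^{s₁}}` that are independent over `F_q`.
Their Moore matrix `(u_j^{q^i})` is invertible (a nonzero `q`-polynomial of `q`-degree `< k`
has fewer than `q^k` roots) and is defined over `F_{q^{s₁}}`, so the vanishing conditions give
`c = -c_h (η₁ a + η₂ b)` with `a, b` over `F_{q^{s₁}}`. The `h`-th coordinate reads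
`c_h (1 + η₁ a_h + η₂ b_h) = 0`, and the second factor is nonzero because
`η₁ ∈ F_{q^{s₂}} \ F_{q^{s₁}}` and `η₂ ∉ F_{q^{s₂}}`. Hence `c = 0`, and the weight `n - k + 1`
is attained by a nonzero codeword vanishing on the first `k - 1` coordinates.
-/

open Finset Matrix Module Polynomial Submodule Set

namespace TwistedGabidulin

section RankWeight

variable {R V : Type*} [DivisionRing R] [AddCommGroup V] [Module R V]

theorem exists_linearIndependent_forall_map_eq_zero {W : Type*} [AddCommGroup W] [Module R W]
    (f : V →ₗ[R] W) {n k : ℕ} {β : Fin n → V} (hβ : LinearIndependent R β)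
    (hk : finrank R (span R (range (f ∘ β))) + k ≤ n) :
    ∃ u : Fin k → V, LinearIndependent R u ∧ ∀ i, f (u i) = 0 := by
  have : FiniteDimensional R (span R (range β)) := .span_of_finite R (finite_range β)
  let g := f.domRestrict (span R (range β))
  have hrange : LinearMap.range g = span R (range (f ∘ β)) := by
    rw [LinearMap.range_domRestrict, map_span, range_comp]
  have hnullity := g.finrank_range_add_finrank_ker
  rw [hrange, finrank_span_eq_card hβ, Fintype.card_fin] at hnullity
  obtain ⟨v, hv⟩ := exists_linearIndependent_of_le_finrank (R := R) (M := LinearMap.ker g) (n := k)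
    (by omega)
  exact ⟨fun i => v i, (hv.map' _ (ker_subtype _)).map' _ (ker_subtype _), fun i => (v i).2⟩

theorem finrank_span_range_le_of_eq_zero_of_lt {n r : ℕ} (c : Fin n → V)
    (hc : ∀ j : Fin n, (j : ℕ) < r → c j = 0) : finrank R (span R (range c)) ≤ n - r := by
  classical
  let s : Finset (Fin n) := {j | ¬ (j : ℕ) < r}
  have hspan : span R (range c) ≤ span R (s.image c) := span_le.mpr <| range_subset_iff.mpr
    fun j => if hj : (j : ℕ) < r then hc j hj ▸ zero_mem _
      else subset_span (mem_image_of_mem c (by simpa [s] using hj))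
  have hs : #s = n - r := by
    have := card_filter_add_card_filter_not (s := univ) fun j : Fin n => (j : ℕ) < r
    simp only [Fin.card_filter_val_lt, card_univ, Fintype.card_fin] at this
    simp only [s]
    omega
  calc finrank R (span R (range c)) ≤ finrank R (span R (s.image c : Set V)) :=
        Submodule.finrank_mono hspan
    _ ≤ #(s.image c) := finrank_span_finset_le_card _
    _ ≤ n - r := hs ▸ card_image_le

theorem exists_ne_zero_finrank_span_range_le {K : Type*} [Field K] [Module R K] {k n : ℕ}
    (Φ : (Fin k → K) →ₗ[K] (Fin n → K)) (hk : 0 < k) (hkn : k ≤ n + 1) :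
    ∃ c ≠ 0, finrank R (span R (range (Φ c))) ≤ n + 1 - k := by
  let P : (Fin n → K) →ₗ[K] (Fin (k - 1) → K) := LinearMap.funLeft K K (Fin.castLE (by omega))
  have hker : LinearMap.ker (P ∘ₗ Φ) ≠ ⊥ :=
    LinearMap.ker_ne_bot_of_finrank_lt (by simp only [finrank_fin_fun]; omega)
  obtain ⟨c, hc, hc0⟩ := (Submodule.ne_bot_iff _).mp hker
  refine ⟨c, hc0, (finrank_span_range_le_of_eq_zero_of_lt (r := k - 1) _ fun j hj => ?_).trans
    (by omega)⟩
  exact congrFun (LinearMap.mem_ker.mp hc) ⟨j, hj⟩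

end RankWeight

section Linearized

variable (Fq : Type*) [Field Fq] [Fintype Fq]

noncomputable def frobeniusPow {E : Type*} [CommRing E] [Algebra Fq E] (e : ℕ) : E →ₗ[Fq] E :=
  (FiniteField.frobeniusAlgHom Fq E ^ e).toLinearMap

@[simp]
theorem frobeniusPow_apply {E : Type*} [CommRing E] [Algebra Fq E] (e : ℕ) (x : E) :
    frobeniusPow Fq e x = x ^ Fintype.card Fq ^ e := by
  simp [frobeniusPow, AlgHom.coe_pow, FiniteField.coe_frobeniusAlgHom, pow_iterate]

variable {E : Type*} [Field E] [Algebra Fq E] {k : ℕ}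

noncomputable def linearizedMap (c : Fin k → E) : E →ₗ[Fq] E :=
  ∑ i, c i • frobeniusPow Fq i

theorem linearizedMap_apply (c : Fin k → E) (x : E) :
    linearizedMap Fq c x = ∑ i, c i * x ^ Fintype.card Fq ^ (i : ℕ) := by
  simp [linearizedMap]

theorem eq_zero_of_forall_linearizedMap_eq_zero {c u : Fin k → E} (hu : LinearIndependent Fq u)
    (hc : ∀ j, linearizedMap Fq c (u j) = 0) : c = 0 := by
  classical
  set q := Fintype.card Fq
  have hq : 1 < q := Fintype.one_lt_card
  let P : E[X] := ∑ i, C (c i) * X ^ q ^ (i : ℕ)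
  let U := span Fq (range u)
  have hU : U ≤ LinearMap.ker (linearizedMap Fq c) := span_le.mpr (range_subset_iff.mpr hc)
  have : Module.Finite Fq U := .span_of_finite Fq (finite_range u)
  have := Module.finite_of_finite Fq (M := U)
  have : Fintype U := Fintype.ofFinite U
  have hP : P = 0 := by
    refine eq_zero_of_natDegree_lt_card_of_eval_eq_zero P Subtype.val_injective
      (fun x : U => ?_) ?_
    · simpa [P, eval_finsetSum, linearizedMap_apply] using hU x.2
    · rw [Module.card_eq_pow_finrank (K := Fq), finrank_span_eq_card hu, Fintype.card_fin]
      refine (natDegree_sum_le_of_forall_le _ _ fun i _ => (natDegree_C_mul_X_pow_le _ _).trans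
        (Nat.le_sub_one_of_lt (Nat.pow_lt_pow_right hq i.2))).trans_lt
        (Nat.sub_one_lt (by positivity))
  funext i
  simpa [P, finsetSum_coeff, coeff_C_mul, coeff_X_pow, (Nat.pow_right_injective hq).eq_iff,
    Fin.val_inj] using congrArg (coeff · (q ^ (i : ℕ))) hP

def mooreMatrix {R : Type*} [CommRing R] (q : ℕ) (u : Fin k → R) : Matrix (Fin k) (Fin k) R :=
  of fun i j => u j ^ q ^ (i : ℕ)

theorem map_mooreMatrix {R S : Type*} [CommRing R] [CommRing S] (f : R →+* S) (q : ℕ)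
    (u : Fin k → R) : (mooreMatrix q u).map f = mooreMatrix q (f ∘ u) := by
  ext
  simp [mooreMatrix]

theorem vecMul_mooreMatrix (c u : Fin k → E) (j : Fin k) :
    (c ᵥ* mooreMatrix (Fintype.card Fq) u) j = linearizedMap Fq c (u j) := by
  simp [mooreMatrix, vecMul, dotProduct, linearizedMap_apply]

theorem isUnit_mooreMatrix {u : Fin k → E} (hu : LinearIndependent Fq u) :
    IsUnit (mooreMatrix (Fintype.card Fq) u) := by
  refine vecMul_injective_iff_isUnit.mp fun a b hab => sub_eq_zero.mp <|
    eq_zero_of_forall_linearizedMap_eq_zero Fq hu fun j => ?_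
  rw [← vecMul_mooreMatrix, sub_vecMul]
  exact congrFun (sub_eq_zero.mpr hab) j

end Linearized

theorem one_add_mul_add_mul_ne_zero {F1 F2 K : Type*} [Field F1] [Field F2] [Field K]
    [Algebra F1 F2] [Algebra F2 K] [Algebra F1 K] [IsScalarTower F1 F2 K] {η₁ η₂ : K}
    (hη₁ : η₁ ∈ range (algebraMap F2 K) ∧ η₁ ∉ range (algebraMap F1 K))
    (hη₂ : η₂ ∉ range (algebraMap F2 K)) (a b : F1) :
    1 + η₁ * algebraMap F1 K a + η₂ * algebraMap F1 K b ≠ 0 := by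
  obtain ⟨⟨ζ, rfl⟩, hζ⟩ := hη₁
  intro h0
  by_cases hb : b = 0
  · subst hb
    refine hζ ⟨-a⁻¹, ?_⟩
    rw [map_zero, mul_zero, add_zero] at h0
    rw [map_neg, map_inv₀, neg_inv]
    exact (eq_inv_of_mul_eq_one_left (by linear_combination -h0)).symm
  · refine hη₂ ⟨-(1 + ζ * algebraMap F1 F2 a) / algebraMap F1 F2 b, ?_⟩
    have hb' : algebraMap F1 K b ≠ 0 := by simpa using hb
    rw [map_div₀, map_neg, map_add, map_one, map_mul, ← IsScalarTower.algebraMap_apply,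
      ← IsScalarTower.algebraMap_apply, div_eq_iff hb']
    linear_combination -h0

section Twisted

variable (Fq : Type*) [Field Fq] [Fintype Fq] {K : Type*} [Field K] [Algebra Fq K] {k : ℕ}

noncomputable def twistedMap (h : Fin k) (t₁ t₂ : ℕ) (η₁ η₂ : K) (c : Fin k → K) : K →ₗ[Fq] K :=
  linearizedMap Fq c + c h • (η₁ • frobeniusPow Fq (k + t₁) + η₂ • frobeniusPow Fq (k + t₂))

theorem twistedMap_apply (h : Fin k) (t₁ t₂ : ℕ) (η₁ η₂ : K) (c : Fin k → K) (x : K) :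
    twistedMap Fq h t₁ t₂ η₁ η₂ c x = linearizedMap Fq c x +
      c h * (η₁ * x ^ Fintype.card Fq ^ (k + t₁) + η₂ * x ^ Fintype.card Fq ^ (k + t₂)) := by
  simp [twistedMap, mul_add]

variable {F1 F2 : Type*} [Field F1] [Field F2] [Algebra Fq F1] [Algebra F1 F2] [Algebra F2 K]
  [Algebra F1 K] [IsScalarTower F1 F2 K] {η₁ η₂ : K}

theorem eq_zero_of_forall_twistedMap_eq_zero
    (hη₁ : η₁ ∈ range (algebraMap F2 K) ∧ η₁ ∉ range (algebraMap F1 K))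
    (hη₂ : η₂ ∉ range (algebraMap F2 K)) (h : Fin k) (t₁ t₂ : ℕ) {c : Fin k → K}
    {u : Fin k → F1} (hu : LinearIndependent Fq u)
    (hc : ∀ j, twistedMap Fq h t₁ t₂ η₁ η₂ c (algebraMap F1 K (u j)) = 0) : c = 0 := by
  set f := algebraMap F1 K
  have hM := isUnit_mooreMatrix Fq hu
  have hMK : IsUnit (mooreMatrix (Fintype.card Fq) (f ∘ u)) :=
    map_mooreMatrix f (Fintype.card Fq) u ▸ hM.map f.mapMatrix
  have hsolve : ∀ e, ∃ a : Fin k → F1,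
      (f ∘ a) ᵥ* mooreMatrix (Fintype.card Fq) (f ∘ u) =
        fun j => f (u j) ^ Fintype.card Fq ^ e := by
    intro e
    obtain ⟨a, ha⟩ := vecMul_surjective_iff_isUnit.mpr hM fun j => u j ^ Fintype.card Fq ^ e
    refine ⟨a, funext fun j => ?_⟩
    rw [← map_mooreMatrix, ← f.map_vecMul, ← map_pow]
    exact congrArg f (congrFun ha j)
  obtain ⟨a, ha⟩ := hsolve (k + t₁)
  obtain ⟨b, hb⟩ := hsolve (k + t₂)
  have hsol : c + c h • (η₁ • (f ∘ a) + η₂ • (f ∘ b)) = 0 := by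
    apply vecMul_injective_iff_isUnit.mpr hMK
    beta_reduce
    rw [add_vecMul, smul_vecMul, add_vecMul, smul_vecMul, smul_vecMul, ha, hb, zero_vecMul]
    funext j
    rw [Pi.zero_apply, ← hc j, twistedMap_apply]
    simp [vecMul_mooreMatrix, mul_add]
  have hch : c h = 0 := by
    have hsol_h := congrFun hsol h
    simp only [Pi.add_apply, Pi.smul_apply, Function.comp_apply, smul_eq_mul,
      Pi.zero_apply] at hsol_h
    have hh : c h * (1 + η₁ * f (a h) + η₂ * f (b h)) = 0 := by
      linear_combination hsol_h
    exact (mul_eq_zero.mp hh).resolve_right (one_add_mul_add_mul_ne_zero hη₁ hη₂ _ _)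
  simpa [hch] using hsol

theorem le_finrank_span_range_twistedMap [IsScalarTower Fq F1 K]
    (hη₁ : η₁ ∈ range (algebraMap F2 K) ∧ η₁ ∉ range (algebraMap F1 K))
    (hη₂ : η₂ ∉ range (algebraMap F2 K)) (h : Fin k) (t₁ t₂ : ℕ) {n : ℕ} {β : Fin n → F1}
    (hβ : LinearIndependent Fq β) (hkn : k ≤ n) {c : Fin k → K} (hc : c ≠ 0) :
    n + 1 - k ≤ finrank Fq (span Fq (range fun j =>
      twistedMap Fq h t₁ t₂ η₁ η₂ c (algebraMap F1 K (β j)))) := by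
  by_contra hlt
  have hk : finrank Fq (span Fq (range fun j =>
      twistedMap Fq h t₁ t₂ η₁ η₂ c (algebraMap F1 K (β j)))) + k ≤ n := by omega
  obtain ⟨u, hu, hu0⟩ := exists_linearIndependent_forall_map_eq_zero
    (twistedMap Fq h t₁ t₂ η₁ η₂ c ∘ₗ (IsScalarTower.toAlgHom Fq F1 K).toLinearMap) hβ hk
  exact hc (eq_zero_of_forall_twistedMap_eq_zero Fq hη₁ hη₂ h t₁ t₂ hu hu0)

def twistedGabidulinRows (q : ℕ) (h : Fin k) (t₁ t₂ : ℕ) (η₁ η₂ : K) {n : ℕ} (x : Fin n → K) :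
    Fin k → Fin n → K := fun i j =>
  if i = h then x j ^ q ^ (h : ℕ) + η₁ * x j ^ q ^ (k + t₁) + η₂ * x j ^ q ^ (k + t₂)
  else x j ^ q ^ (i : ℕ)

theorem sum_smul_twistedGabidulinRows (h : Fin k) (t₁ t₂ : ℕ) (η₁ η₂ : K) {n : ℕ}
    (x : Fin n → K) (c : Fin k → K) :
    ∑ i, c i • twistedGabidulinRows (Fintype.card Fq) h t₁ t₂ η₁ η₂ x i =
      fun j => twistedMap Fq h t₁ t₂ η₁ η₂ c (x j) := by
  have hrow : ∀ i j, twistedGabidulinRows (Fintype.card Fq) h t₁ t₂ η₁ η₂ x i j =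
      x j ^ Fintype.card Fq ^ (i : ℕ) + if i = h then
        η₁ * x j ^ Fintype.card Fq ^ (k + t₁) + η₂ * x j ^ Fintype.card Fq ^ (k + t₂) else 0 := by
    intro i j
    unfold twistedGabidulinRows
    split_ifs with hi
    · rw [hi]; ring
    · rw [add_zero]
  funext j
  simp [hrow, twistedMap_apply, linearizedMap_apply, Finset.sum_apply, mul_add, sum_add_distrib]

end Twisted

end TwistedGabidulin

open TwistedGabidulin in
theorem C2_chain_MRD_general {Fq F1 F2 K : Type*} [Field Fq] [Fintype Fq] [Field F1]
    [Field F2] [Field K]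
    [Algebra Fq F1] [Algebra F1 F2] [Algebra F2 K] [Algebra F1 K] [Algebra Fq K]
    [IsScalarTower F1 F2 K] [IsScalarTower Fq F1 K]
    (q n k h t₁ t₂ : ℕ) (hq : Fintype.card Fq = q)
    (hkn : k < n) (hh : h < k)
    (β : ℕ → F1) (hβ : LinearIndependent Fq (fun i : Fin n => β (i:ℕ)))
    (η₁ η₂ : K)
    (hη₁ : η₁ ∈ Set.range (algebraMap F2 K) ∧ η₁ ∉ Set.range (algebraMap F1 K))
    (hη₂ : η₂ ∉ Set.range (algebraMap F2 K)) :
    sInf {w : ℕ | ∃ c ∈ Submodule.span K (Set.range (fun i : Fin k => fun j : Fin n =>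
          if (i:ℕ) = h then
            algebraMap F1 K (β (j:ℕ)) ^ q ^ h + η₁ * algebraMap F1 K (β (j:ℕ)) ^ q ^ (k + t₁)
              + η₂ * algebraMap F1 K (β (j:ℕ)) ^ q ^ (k + t₂)
          else algebraMap F1 K (β (j:ℕ)) ^ q ^ (i:ℕ))),
        c ≠ 0 ∧ w = Module.finrank Fq (Submodule.span Fq (Set.range c))} = n - k + 1 := by
  subst hq
  obtain ⟨h, rfl⟩ : ∃ h' : Fin k, (h' : ℕ) = h := ⟨⟨h, hh⟩, rfl⟩
  simp only [Fin.val_inj]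
  set rows := twistedGabidulinRows (Fintype.card Fq) h t₁ t₂ η₁ η₂
    fun j : Fin n => algebraMap F1 K (β j)
  change sInf {w : ℕ | ∃ c ∈ span K (range rows), c ≠ 0 ∧ w = finrank Fq (span Fq (range c))} =
    n - k + 1
  have hweight : ∀ c : Fin k → K, c ≠ 0 →
      n - k + 1 ≤ finrank Fq (span Fq (range (∑ i, c i • rows i))) := fun c hc => by
    rw [sum_smul_twistedGabidulinRows]
    have := le_finrank_span_range_twistedMap Fq hη₁ hη₂ h t₁ t₂ hβ hkn.le hc
    omega
  refine IsLeast.csInf_eq ⟨?_, ?_⟩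
  · obtain ⟨c, hc0, hc⟩ := exists_ne_zero_finrank_span_range_le (R := Fq)
      (Fintype.linearCombination K rows) (by omega) (by omega)
    rw [Fintype.linearCombination_apply] at hc
    have hlow := hweight c hc0
    refine ⟨_, (mem_span_range_iff_exists_fun K).mpr ⟨c, rfl⟩, fun h0 => ?_, by omega⟩
    rw [h0, span_eq_bot.mpr (by simp), finrank_bot] at hlow
    omega
  · rintro w ⟨c, hc, hc0, rfl⟩
    obtain ⟨a, rfl⟩ := (mem_span_range_iff_exists_fun K).mp hc
    exact hweight a (by rintro rfl; simp at hc0)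

/-- for a proper chain of subfields `F_q ⊊ F_{q^{s₁}} ⊊ F_{q^{s₂}} ⊊ F_{q^m}`
with `n ≤ s₁`, evaluation points in `F_{q^{s₁}}`, `η₁ ∈ F_{q^{s₂}} \ F_{q^{s₁}}` and
`η₂ ∈ F_{q^m} \ F_{q^{s₂}}`, the twisted Gabidulin code `C₂` with two twists is MRD. -/
theorem C2_chain_MRD {Fq F1 F2 K : Type*} [Field Fq] [Fintype Fq] [Field F1] [Fintype F1]
    [Field F2] [Fintype F2] [Field K] [Fintype K]
    [Algebra Fq F1] [Algebra F1 F2] [Algebra F2 K] [Algebra F1 K] [Algebra Fq K]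
    [IsScalarTower F1 F2 K] [IsScalarTower Fq F1 K]
    (q s₁ s₂ m n k h t₁ t₂ : ℕ) (hq : Fintype.card Fq = q)
    (hF1 : Fintype.card F1 = q ^ s₁) (hF2 : Fintype.card F2 = q ^ s₂)
    (hK : Fintype.card K = q ^ m)
    (h1 : 1 < s₁) (h12 : s₁ < s₂) (h2m : s₂ < m) (hd1 : s₁ ∣ s₂) (hd2 : s₂ ∣ m)
    (hns : n ≤ s₁) (hkn : k < n) (hh : h < k) (ht : t₁ < t₂) (ht₂ : t₂ < n - k)
    (β : ℕ → F1) (hβ : LinearIndependent Fq (fun i : Fin n => β (i:ℕ)))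
    (η₁ η₂ : K)
    (hη₁ : η₁ ∈ Set.range (algebraMap F2 K) ∧ η₁ ∉ Set.range (algebraMap F1 K))
    (hη₂ : η₂ ∉ Set.range (algebraMap F2 K)) :
    sInf {w : ℕ | ∃ c ∈ Submodule.span K (Set.range (fun i : Fin k => fun j : Fin n =>
          if (i:ℕ) = h then
            algebraMap F1 K (β (j:ℕ)) ^ q ^ h + η₁ * algebraMap F1 K (β (j:ℕ)) ^ q ^ (k + t₁)
              + η₂ * algebraMap F1 K (β (j:ℕ)) ^ q ^ (k + t₂)
          else algebraMap F1 K (β (j:ℕ)) ^ q ^ (i:ℕ))),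
        c ≠ 0 ∧ w = Module.finrank Fq (Submodule.span Fq (Set.range c))} = n - k + 1 :=
  C2_chain_MRD_general q n k h t₁ t₂ hq hkn hh β hβ η₁ η₂ hη₁ hη₂
end

section
/- Let q be a prime power, k < n ≤ m, α_1,...,α_n ∈ F_{q^m} linearly independent over F_q, η ∈ F_{q^m}*, 0 ≤ h ≤ k-1, 0 ≤ t ≤ n-k-1. For a k-subset I of {1,...,n}, let g_h^{(t)}(I) be the scalar satisfying det(M_I^{(h,k+t)}) = g_h^{(t)}(I)·det(M_I), where M_I is the k×k Moore matrix of (α_i)_{i ∈ I} and M_I^{(h,k+t)} has row h replaced by the q^{k+t}-powers. Then the twisted Gabidulin code C₁ (with one twist η at row h, exponent k+t) is MDS in the Hamming metric if and only if η^{-1} ≠ -g_h^{(t)}(I) for every k-subset I of {1,...,n}. -/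
/-!
Multilinearity of the determinant in the twisted row gives, for every `k`-subset `I` of columns,
`det (G_I) = det M_I + η · det M_I^{(h,k+t)} = (1 + η g_h^{(t)}(I)) · det M_I`.
The Moore determinant `det M_I` is nonzero: a `q`-linearized polynomial `∑_{i<s} c_i X^{q^i}`
vanishing at `s` elements that are independent over `F_q` vanishes on their `F_q`-span, which has
`q^s` elements, more than its degree. So the condition on `η` says exactly that all `k × k` minors
of the generator matrix `G` are nonzero, and for a matrix with linearly independent rows this is
the MDS property: a nonzero codeword vanishing on a `k`-subset of coordinates is the same as a
singular minor, while some nonzero codeword always vanishes on `k - 1` given coordinates.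
The rows of `G` are independent because they arise from rows `0, …, k - 1` of the invertible
`n × n` Moore matrix by adding `η` times row `k + t ≥ k` to row `h`.
-/

open Finset

section Linearized

open Polynomial

variable {Fq K : Type*} [Field Fq] [Fintype Fq] [Field K] [Algebra Fq K]

theorem exists_linearMap_eq_sum_mul_pow_card_pow {s : ℕ} (c : Fin s → K) :
    ∃ L : K →ₗ[Fq] K, ∀ x, L x = ∑ i, c i * x ^ Fintype.card Fq ^ (i : ℕ) :=
  ⟨∑ i, c i • ((FiniteField.frobeniusAlgHom Fq K) ^ (i : ℕ)).toLinearMap, fun x => by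
    simp [LinearMap.sum_apply, FiniteField.coe_frobeniusAlgHom, pow_iterate]⟩

theorem eq_zero_of_sum_mul_pow_card_pow_eq_zero {s : ℕ} {β : Fin s → K}
    (hβ : LinearIndependent Fq β) {c : Fin s → K}
    (hc : ∀ j, ∑ i, c i * β j ^ Fintype.card Fq ^ (i : ℕ) = 0) : c = 0 := by
  have hq : 1 < Fintype.card Fq := Fintype.one_lt_card
  obtain ⟨L, hL⟩ := exists_linearMap_eq_sum_mul_pow_card_pow (Fq := Fq) c
  have hLβ : ∀ j, L (β j) = 0 := fun j => (hL _).trans (hc j)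
  let P : K[X] := ∑ i, C (c i) * X ^ Fintype.card Fq ^ (i : ℕ)
  have hP : ∀ x, P.eval x = L x := fun x => by simp [P, hL, eval_finsetSum]
  have hP_zero : P = 0 := by
    refine eq_zero_of_natDegree_lt_card_of_eval_eq_zero P
      hβ.fintypeLinearCombination_injective (fun a => ?_) ?_
    · simp [hP, Fintype.linearCombination_apply, hLβ]
    · have hdeg : P.natDegree ≤ Fintype.card Fq ^ s - 1 :=
        natDegree_sum_le_of_forall_le _ _ fun i _ => (natDegree_C_mul_X_pow_le _ _).trans <|
          Nat.le_sub_one_of_lt (Nat.pow_lt_pow_right hq i.isLt)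
      have : 0 < Fintype.card Fq ^ s := by positivity
      simp only [Fintype.card_fun, Fintype.card_fin]
      omega
  funext i
  simpa [P, finsetSum_coeff, coeff_C_mul, coeff_X_pow, (Nat.pow_right_injective hq).eq_iff,
    Fin.val_inj] using congrArg (coeff · (Fintype.card Fq ^ (i : ℕ))) hP_zero

theorem det_moore_ne_zero {s : ℕ} {β : Fin s → K} (hβ : LinearIndependent Fq β) :
    (Matrix.of fun i j : Fin s => β j ^ Fintype.card Fq ^ (i : ℕ)).det ≠ 0 := by
  intro hdet
  obtain ⟨c, hc0, hc⟩ := Matrix.exists_vecMul_eq_zero_iff.mpr hdet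
  exact hc0 <| eq_zero_of_sum_mul_pow_card_pow_eq_zero hβ fun j => by
    simpa [Matrix.vecMul, dotProduct] using congrFun hc j

end Linearized

section Hamming

variable {ι K : Type*} [Fintype ι] [DecidableEq ι] [Field K] [DecidableEq K]

theorem hammingNorm_le_card_sub_of_eq_zero {c : ι → K} {J : Finset ι}
    (hJ : ∀ j ∈ J, c j = 0) :
    hammingNorm c ≤ Fintype.card ι - #J := by
  rw [← card_compl]
  exact card_le_card fun j hj => mem_compl.2 fun hjJ => (mem_filter.1 hj).2 (hJ j hjJ)

theorem exists_card_eq_forall_eq_zero_of_hammingNorm_le {c : ι → K} {k : ℕ}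
    (hc : hammingNorm c + k ≤ Fintype.card ι) :
    ∃ I : Finset ι, #I = k ∧ ∀ j ∈ I, c j = 0 := by
  have hk : k ≤ #(filter (c · ≠ 0) univ)ᶜ := by
    rw [card_compl]; unfold hammingNorm at hc; omega
  obtain ⟨I, hIsub, hI⟩ := exists_subset_card_eq hk
  exact ⟨I, hI, fun j hj => by simpa using hIsub hj⟩

end Hamming

section MinWeight

open Matrix

variable {K : Type*} [Field K] {k n : ℕ}

theorem mem_span_range_iff_exists_vecMul (G : Matrix (Fin k) (Fin n) K) {c : Fin n → K} :
    c ∈ Submodule.span K (Set.range G) ↔ ∃ x, x ᵥ* G = c := by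
  simp only [Submodule.mem_span_range_iff_exists_fun (R := K) (v := G), vecMul_eq_sum]

variable [DecidableEq K]

noncomputable def minWeight {ι : Type*} [Fintype ι] (C : Submodule K (ι → K)) : ℕ :=
  sInf {w | ∃ c ∈ C, c ≠ 0 ∧ w = hammingNorm c}

variable (G : Matrix (Fin k) (Fin n) K)

theorem exists_ne_zero_hammingNorm_vecMul_le (hk : 0 < k) (hkn : k ≤ n) :
    ∃ x ≠ 0, hammingNorm (x ᵥ* G) ≤ n - k + 1 := by
  obtain ⟨T, hT⟩ := exists_subset_card_eq (s := (univ : Finset (Fin n))) (n := k - 1)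
    (by simp; omega)
  let f := LinearMap.funLeft K K ((↑) : T → Fin n) ∘ₗ G.vecMulLinear
  have hker : LinearMap.ker f ≠ ⊥ := LinearMap.ker_ne_bot_of_finrank_lt (by simp; omega)
  obtain ⟨x, hxker, hx0⟩ := Submodule.ne_bot_iff _ |>.1 hker
  refine ⟨x, hx0, ?_⟩
  have hT0 : ∀ j ∈ T, (x ᵥ* G) j = 0 := fun j hj => congrFun hxker ⟨j, hj⟩
  have := hammingNorm_le_card_sub_of_eq_zero hT0
  simp only [Fintype.card_fin, hT.2] at this
  omega

theorem exists_ne_zero_hammingNorm_vecMul_le_of_det_eq_zero {I : Finset (Fin n)} (hI : #I = k)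
    (hdet : (G.submatrix id (I.orderEmbOfFin hI)).det = 0) :
    ∃ x ≠ 0, hammingNorm (x ᵥ* G) ≤ n - k := by
  obtain ⟨x, hx0, hx⟩ := Matrix.exists_vecMul_eq_zero_iff.mpr hdet
  refine ⟨x, hx0, ?_⟩
  have hI0 : ∀ j ∈ I, (x ᵥ* G) j = 0 := fun j hj => by
    obtain ⟨i, rfl⟩ : j ∈ Set.range (I.orderEmbOfFin hI) := by rwa [range_orderEmbOfFin]
    exact congrFun hx i
  simpa [hI] using hammingNorm_le_card_sub_of_eq_zero hI0

theorem le_hammingNorm_vecMul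
    (hG : ∀ I (hI : #I = k), (G.submatrix id (I.orderEmbOfFin hI)).det ≠ 0)
    {x : Fin k → K} (hx : x ᵥ* G ≠ 0) : n - k + 1 ≤ hammingNorm (x ᵥ* G) := by
  by_contra! hlt
  have := hammingNorm_pos_iff.2 hx
  obtain ⟨I, hI, hzero⟩ :=
    exists_card_eq_forall_eq_zero_of_hammingNorm_le (c := x ᵥ* G) (k := k)
      (by rw [Fintype.card_fin]; omega)
  refine hx ?_
  suffices x = 0 by simp [this]
  by_contra hx0
  refine hG I hI <| Matrix.exists_vecMul_eq_zero_iff.1 ⟨x, hx0, funext fun i => ?_⟩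
  exact hzero _ (I.orderEmbOfFin_mem hI i)

variable {G}

theorem minWeight_span_rows_eq_iff (hG : LinearIndependent K G) (hk : 0 < k) (hkn : k ≤ n) :
    minWeight (Submodule.span K (Set.range G)) = n - k + 1 ↔
      ∀ I (hI : #I = k), (G.submatrix id (I.orderEmbOfFin hI)).det ≠ 0 := by
  have hinj : ∀ x : Fin k → K, x ≠ 0 → x ᵥ* G ≠ 0 := fun x hx0 hx => hx0 <| funext <|
    Fintype.linearIndependent_iff.1 hG x (by rwa [← vecMul_eq_sum])
  have hmem : ∀ x : Fin k → K, x ≠ 0 → hammingNorm (x ᵥ* G) ∈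
      {w | ∃ c ∈ Submodule.span K (Set.range G), c ≠ 0 ∧ w = hammingNorm c} := fun x hx0 =>
    ⟨x ᵥ* G, (mem_span_range_iff_exists_vecMul G).2 ⟨x, rfl⟩, hinj x hx0, rfl⟩
  obtain ⟨x₀, hx₀, hx₀w⟩ := exists_ne_zero_hammingNorm_vecMul_le G hk hkn
  have hle : minWeight (Submodule.span K (Set.range G)) ≤ n - k + 1 :=
    (Nat.sInf_le (hmem x₀ hx₀)).trans hx₀w
  constructor
  · intro hmin I hI hdet
    obtain ⟨x, hx0, hxw⟩ := exists_ne_zero_hammingNorm_vecMul_le_of_det_eq_zero G hI hdet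
    have := (Nat.sInf_le (hmem x hx0)).trans hxw
    rw [← minWeight, hmin] at this
    omega
  · intro hminors
    refine hle.antisymm (le_csInf ⟨_, hmem x₀ hx₀⟩ ?_)
    rintro w ⟨c, hc, hc0, rfl⟩
    obtain ⟨x, rfl⟩ := (mem_span_range_iff_exists_vecMul G).1 hc
    exact le_hammingNorm_vecMul G hminors hc0

end MinWeight

section Twisted

open Matrix

variable {K : Type*} [Field K]

theorem det_updateRow_add_smul_eq {m : Type*} [Fintype m] [DecidableEq m] (A : Matrix m m K)
    (r : m) (η : K) (v : m → K) :
    (A.updateRow r (A r + η • v)).det = A.det + η * (A.updateRow r v).det := by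
  rw [det_updateRow_add, det_updateRow_smul, updateRow_eq_self]

theorem det_twisted_moore {k h : ℕ} (hh : h < k) (q e : ℕ) (η : K) (β : Fin k → K) :
    (of fun i j : Fin k =>
        if (i : ℕ) = h then β j ^ q ^ h + η * β j ^ q ^ e else β j ^ q ^ (i : ℕ)).det =
      (of fun i j : Fin k => β j ^ q ^ (i : ℕ)).det +
        η * (of fun i j : Fin k =>
          if (i : ℕ) = h then β j ^ q ^ e else β j ^ q ^ (i : ℕ)).det := by
  have hrow (w : Fin k → K) :
      (of fun i j : Fin k => if (i : ℕ) = h then w j else β j ^ q ^ (i : ℕ)) =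
        (of fun i j : Fin k => β j ^ q ^ (i : ℕ)).updateRow ⟨h, hh⟩ w := by
    ext i j
    simp [updateRow_apply, Fin.ext_iff]
  rw [hrow, hrow]
  exact det_updateRow_add_smul_eq _ _ η _

variable {Fq : Type*} [Field Fq] [Fintype Fq] [Algebra Fq K]

theorem linearIndependent_twisted_moore_rows {k n h t : ℕ} (hh : h < k) (hkt : k + t < n)
    (η : K) {β : Fin n → K} (hβ : LinearIndependent Fq β) :
    LinearIndependent K fun (i : Fin k) (j : Fin n) =>
      if (i : ℕ) = h then β j ^ Fintype.card Fq ^ h + η * β j ^ Fintype.card Fq ^ (k + t)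
      else β j ^ Fintype.card Fq ^ (i : ℕ) := by
  have hM := linearIndependent_rows_of_det_ne_zero (det_moore_ne_zero hβ)
  have hc : (Pi.single ⟨h, by omega⟩ η : Fin n → K) ⟨k + t, hkt⟩ = 0 := by
    simp [Pi.single_apply, Fin.ext_iff]; omega
  have := ((linearIndependent_add_smul_iff hc).2 hM).comp (Fin.castLE (show k ≤ n by omega))
    (Fin.castLE_injective _)
  convert! this using 1
  funext i j
  simp only [Pi.single_apply, Fin.ext_iff]
  split_ifs <;> simp [*]

end Twisted

theorem add_mul_ne_zero_iff_forall_inv_ne_neg {K : Type*} [Field K] {a b η : K} (hb : b ≠ 0)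
    (hη : η ≠ 0) : b + η * a ≠ 0 ↔ ∀ g, a = g * b → η⁻¹ ≠ -g := by
  constructor
  · rintro hne g rfl hg
    apply hne
    rw [neg_eq_iff_eq_neg.1 hg.symm]
    field_simp
    ring
  · intro H h0
    refine H (a / b) (div_mul_cancel₀ a hb).symm ?_
    field_simp
    linear_combination h0

theorem C1_MDS_iff_general {Fq K : Type*} [Field Fq] [Fintype Fq] [Field K] [DecidableEq K]
    [Algebra Fq K] (q n k h t : ℕ) (hq : Fintype.card Fq = q)
    (hkn : k < n) (hh : h < k) (ht : t < n - k)
    (α : ℕ → K) (hα : LinearIndependent Fq (fun i : Fin n => α (i:ℕ)))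
    (η : K) (hη : η ≠ 0) :
    (sInf {w : ℕ | ∃ c ∈ Submodule.span K (Set.range (fun i : Fin k => fun j : Fin n =>
          if (i:ℕ) = h then α (j:ℕ) ^ q ^ h + η * α (j:ℕ) ^ q ^ (k + t)
          else α (j:ℕ) ^ q ^ (i:ℕ))),
        c ≠ 0 ∧ w = hammingNorm c} = n - k + 1)
    ↔
    (∀ (I : Finset (Fin n)) (hI : I.card = k) (gI : K),
      Matrix.det (Matrix.of fun i j : Fin k =>
          if (i:ℕ) = h then α (((I.orderIsoOfFin hI j : I) : Fin n) : ℕ) ^ q ^ (k + t)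
          else α (((I.orderIsoOfFin hI j : I) : Fin n) : ℕ) ^ q ^ (i:ℕ)) =
        gI * Matrix.det (Matrix.of fun i j : Fin k =>
          α (((I.orderIsoOfFin hI j : I) : Fin n) : ℕ) ^ q ^ (i:ℕ)) →
      η⁻¹ ≠ -gI) := by
  subst hq
  refine (minWeight_span_rows_eq_iff (linearIndependent_twisted_moore_rows hh (by omega) η hα)
    (by omega) hkn.le).trans (forall₂_congr fun I hI => ?_)
  simp only [Matrix.submatrix, id, coe_orderIsoOfFin_apply]
  rw [det_twisted_moore hh]
  refine add_mul_ne_zero_iff_forall_inv_ne_neg (det_moore_ne_zero ?_) hη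
  exact hα.comp _ (I.orderEmbOfFin hI).injective

/-- the one-twist twisted Gabidulin code `C₁` is MDS in the Hamming metric
(minimum Hamming distance `n - k + 1`) iff `η⁻¹ ≠ -g_h^{(t)}(I)` for every `k`-subset `I`
of the column set, where `g_h^{(t)}(I)` is the scalar with
`det(M_I^{(h,k+t)}) = g_h^{(t)}(I)·det(M_I)`. -/
theorem C1_MDS_iff {Fq K : Type*} [Field Fq] [Fintype Fq] [Field K] [Fintype K] [DecidableEq K]
    [Algebra Fq K] (q m n k h t : ℕ) (hq : Fintype.card Fq = q) (hK : Fintype.card K = q ^ m)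
    (hkn : k < n) (hnm : n ≤ m) (hh : h < k) (ht : t < n - k)
    (α : ℕ → K) (hα : LinearIndependent Fq (fun i : Fin n => α (i:ℕ)))
    (η : K) (hη : η ≠ 0) :
    (sInf {w : ℕ | ∃ c ∈ Submodule.span K (Set.range (fun i : Fin k => fun j : Fin n =>
          if (i:ℕ) = h then α (j:ℕ) ^ q ^ h + η * α (j:ℕ) ^ q ^ (k + t)
          else α (j:ℕ) ^ q ^ (i:ℕ))),
        c ≠ 0 ∧ w = hammingNorm c} = n - k + 1)
    ↔
    (∀ (I : Finset (Fin n)) (hI : I.card = k) (gI : K),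
      Matrix.det (Matrix.of fun i j : Fin k =>
          if (i:ℕ) = h then α (((I.orderIsoOfFin hI j : I) : Fin n) : ℕ) ^ q ^ (k + t)
          else α (((I.orderIsoOfFin hI j : I) : Fin n) : ℕ) ^ q ^ (i:ℕ)) =
        gI * Matrix.det (Matrix.of fun i j : Fin k =>
          α (((I.orderIsoOfFin hI j : I) : Fin n) : ℕ) ^ q ^ (i:ℕ)) →
      η⁻¹ ≠ -gI) :=
  C1_MDS_iff_general q n k h t hq hkn hh ht α hα η hη
end
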